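/- arXiv:math/0603399 — 11 statements merged into one kernel-verified Lean document; each statement's English description precedes it below -/
import Mathlib

section
/- Let X be a set, let < be a fixed total (strict) order on X, and let R = {(x,y) ∈ X² : x < y}. Call a subset A ⊆ R closed if for all x < y < z, (x,y) ∈ A and (y,z) ∈ A imply (x,z) ∈ A; call A co-closed if R \ A is closed. Then the map sending any total strict order <' on X to the set {(x,y) ∈ R : y <' x} is injective, and its image is exactly the set of subsets of R that are both closed and co-closed. -/
/-- `L` sends a total strict order `r` on `X` to `{(x,y) ∈ R : y <_r x}`. -/
def OrdL {X : Type*} (lt : X → X → Prop)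
    (r : {r : X → X → Prop // IsStrictTotalOrder X r}) : Set (X × X) :=
  {p | lt p.1 p.2 ∧ r.val p.2 p.1}

/-- A subset `A` of `R = {(x,y) : x < y}` is closed. -/
def OrdClosed {X : Type*} (lt : X → X → Prop) (A : Set (X × X)) : Prop :=
  ∀ x y z, lt x y → lt y z → (x, y) ∈ A → (y, z) ∈ A → (x, z) ∈ A

lemma sto_not_iff {X : Type*} {t : X → X → Prop} (ht : IsStrictTotalOrder X t)
    {x y : X} (hxy : x ≠ y) : t x y ↔ ¬ t y x := by
  constructor
  · intro h h'
    exact ht.irrefl x (ht.trans _ _ _ h h')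
  · intro h
    rcases (haveI := ht; trichotomous_of t x y) with h1 | h1 | h1
    · exact h1
    · exact absurd h1 hxy
    · exact absurd h1 h

theorem stmt0 {X : Type*} (lt : X → X → Prop) [IsStrictTotalOrder X lt]
    (R : Set (X × X)) (hR : R = {p | lt p.1 p.2}) :
    Function.Injective (OrdL lt) ∧
      Set.range (OrdL lt) =
        {A | A ⊆ R ∧ OrdClosed lt A ∧ OrdClosed lt (R \ A)} := by
  subst hR
  constructor
  · intro r s h
    apply Subtype.ext
    funext a b
    apply propext
    have key : ∀ x y, lt x y → (r.val y x ↔ s.val y x) := by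
      intro x y hxy
      have := Set.ext_iff.mp h (x, y)
      simpa [OrdL, hxy] using this
    rcases trichotomous_of lt a b with hab | rfl | hba
    · have hne : a ≠ b := by rintro rfl; exact irrefl_of lt a hab
      rw [sto_not_iff r.2 hne, sto_not_iff s.2 hne, key a b hab]
    · exact iff_of_false (r.2.irrefl a) (s.2.irrefl a)
    · exact key b a hba
  · ext A
    constructor
    · rintro ⟨r, rfl⟩
      refine ⟨fun p hp => hp.1, ?_, ?_⟩
      · rintro x y z hxy hyz ⟨-, h1⟩ ⟨-, h2⟩
        exact ⟨trans_of lt hxy hyz, r.2.trans _ _ _ h2 h1⟩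
      · rintro x y z hxy hyz ⟨-, h1⟩ ⟨-, h2⟩
        have hne1 : x ≠ y := by rintro rfl; exact irrefl_of lt x hxy
        have hne2 : y ≠ z := by rintro rfl; exact irrefl_of lt y hyz
        have hrxy : r.val x y := by
          rw [sto_not_iff r.2 hne1]; intro hh; exact h1 ⟨hxy, hh⟩
        have hryz : r.val y z := by
          rw [sto_not_iff r.2 hne2]; intro hh; exact h2 ⟨hyz, hh⟩
        have hrxz := r.2.trans _ _ _ hrxy hryz
        refine ⟨trans_of lt hxy hyz, fun hh => ?_⟩
        exact r.2.irrefl x (r.2.trans _ _ _ hrxz hh.2)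
    · rintro ⟨hsub, hcl, hcc⟩
      set r : X → X → Prop := fun x y => (lt x y ∧ (x, y) ∉ A) ∨ (lt y x ∧ (y, x) ∈ A)
        with hrdef
      have hAlt : ∀ p : X × X, p ∈ A → lt p.1 p.2 := fun p hp => hsub hp
      have hdiff : ∀ x y, lt x y → (x, y) ∉ A → (x, y) ∈ ({p : X × X | lt p.1 p.2} \ A) :=
        fun x y h1 h2 => ⟨h1, h2⟩
      haveI hir : IsIrrefl X r := by
        constructor
        intro x hx
        rcases hx with ⟨h, -⟩ | ⟨h, -⟩ <;> exact irrefl_of lt x h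
      haveI htr : IsTrans X r := by
        constructor
        rintro x y z (⟨h1, h2⟩ | ⟨h1, h2⟩) (⟨h3, h4⟩ | ⟨h3, h4⟩)
        · exact Or.inl ⟨trans_of lt h1 h3,
            (hcc x y z h1 h3 (hdiff _ _ h1 h2) (hdiff _ _ h3 h4)).2⟩
        · rcases trichotomous_of lt x z with hxz | rfl | hzx
          · exact Or.inl ⟨hxz, fun hA => h2 (hcl x z y hxz h3 hA h4)⟩
          · exact absurd h4 h2
          · refine Or.inr ⟨hzx, by_contra fun hna => ?_⟩
            exact (hcc z x y hzx h1 (hdiff _ _ hzx hna) (hdiff _ _ h1 h2)).2 h4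
        · rcases trichotomous_of lt x z with hxz | rfl | hzx
          · exact Or.inl ⟨hxz, fun hA => h4 (hcl y x z h1 hxz h2 hA)⟩
          · exact absurd h2 h4
          · refine Or.inr ⟨hzx, by_contra fun hna => ?_⟩
            exact (hcc y z x h3 hzx (hdiff _ _ h3 h4) (hdiff _ _ hzx hna)).2 h2
        · exact Or.inr ⟨trans_of lt h3 h1, hcl z y x h3 h1 h4 h2⟩
      haveI htri : IsTrichotomous X r := by
        constructor
        intro x y
        suffices H : r x y ∨ x = y ∨ r y x by
          intro h1 h2
          rcases H with h | h | h
          · exact absurd h h1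
          · exact h
          · exact absurd h h2
        rcases trichotomous_of lt x y with hxy | rfl | hyx
        · by_cases hA : (x, y) ∈ A
          · exact Or.inr (Or.inr (Or.inr ⟨hxy, hA⟩))
          · exact Or.inl (Or.inl ⟨hxy, hA⟩)
        · exact Or.inr (Or.inl rfl)
        · by_cases hA : (y, x) ∈ A
          · exact Or.inl (Or.inr ⟨hyx, hA⟩)
          · exact Or.inr (Or.inr (Or.inl ⟨hyx, hA⟩))
      haveI : IsStrictOrder X r := {}
      refine ⟨⟨r, {}⟩, ?_⟩
      ext ⟨a, b⟩
      simp only [OrdL, Set.mem_setOf_eq]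
      constructor
      · rintro ⟨hab, ⟨hba, -⟩ | ⟨-, hA⟩⟩
        · exact absurd hab (asymm_of lt hba)
        · exact hA
      · intro hA
        exact ⟨hAlt _ hA, Or.inr ⟨hAlt _ hA, hA⟩⟩
end

section
/- Let X be a set with a fixed total strict order <_p, and let P be the set of all total strict orders on X. Define an order ≤^p on P by: q ≤^p r iff for all x,y ∈ X, (x <_p y and x <_r y) implies x <_q y. Then (P, ≤^p) is a complete lattice. -/
/-- The order `≤^p` on the set of total strict orders on `X`:
`q ≤^p r` iff for all `x y`, `x <_p y` and `x <_r y` imply `x <_q y`. -/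
def OrdLe {X : Type*} (ltp : X → X → Prop)
    (q r : {r : X → X → Prop // IsStrictTotalOrder X r}) : Prop :=
  ∀ x y, ltp x y → r.val x y → q.val x y

namespace Stmt1Aux

variable {X : Type*} (ltp : X → X → Prop)

/-- A set of `ltp`-pairs that is transitively closed and co-transitively closed. -/
def Biclosed (A : X → X → Prop) : Prop :=
  (∀ x y, A x y → ltp x y) ∧
  (∀ x y z, A x y → A y z → A x z) ∧
  (∀ x y z, ltp x y → ltp y z → A x z → A x y ∨ A y z)

/-- The order obtained from `ltp` by reversing exactly the pairs in `A`. -/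
def flipRel (A : X → X → Prop) (x y : X) : Prop :=
  (ltp x y ∧ ¬ A x y) ∨ (ltp y x ∧ A y x)

/-- Inversion set of `q` relative to `ltp`. -/
def invSet (q : X → X → Prop) (x y : X) : Prop := ltp x y ∧ ¬ q x y

variable [IsStrictTotalOrder X ltp]

lemma ltp_asymm {x y : X} (h : ltp x y) : ¬ ltp y x :=
  fun h' => irrefl_of ltp x (trans_of ltp h h')

lemma ltp_ne {x y : X} (h : ltp x y) : x ≠ y :=
  fun he => irrefl_of ltp y (he ▸ h)

lemma sto_asymm (q : X → X → Prop) [IsStrictTotalOrder X q] {x y : X}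
    (h : q x y) : ¬ q y x :=
  fun h' => irrefl_of q x (trans_of q h h')

lemma sto_of_not (q : X → X → Prop) [IsStrictTotalOrder X q] {x y : X}
    (hne : x ≠ y) (h : ¬ q x y) : q y x := by
  rcases trichotomous_of q x y with h'|h'|h'
  · exact absurd h' h
  · exact absurd h' hne
  · exact h'

lemma flip_sto {A : X → X → Prop} (hA : Biclosed ltp A) :
    IsStrictTotalOrder X (flipRel ltp A) := by
  obtain ⟨hsub, htr, hco⟩ := hA
  haveI h1 : IsIrrefl X (flipRel ltp A) := ⟨fun x h => by
    rcases h with ⟨h, _⟩ | ⟨h, _⟩ <;> exact irrefl_of ltp x h⟩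
  haveI h2 : IsTrans X (flipRel ltp A) := ⟨by
    rintro a b c (⟨hab1, hab2⟩ | ⟨hab1, hab2⟩) (⟨hbc1, hbc2⟩ | ⟨hbc1, hbc2⟩)
    · exact Or.inl ⟨trans_of ltp hab1 hbc1,
        fun h => (hco a b c hab1 hbc1 h).elim hab2 hbc2⟩
    · rcases trichotomous_of ltp a c with h|h|h
      · exact Or.inl ⟨h, fun hac => hab2 (htr a c b hac hbc2)⟩
      · subst h; exact absurd hbc2 hab2
      · exact Or.inr ⟨h, (hco c a b h hab1 hbc2).resolve_right hab2⟩
    · rcases trichotomous_of ltp a c with h|h|h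
      · exact Or.inl ⟨h, fun hac => hbc2 (htr b a c hab2 hac)⟩
      · subst h; exact absurd hab2 hbc2
      · exact Or.inr ⟨h, (hco b c a hbc1 h hab2).resolve_left hbc2⟩
    · exact Or.inr ⟨trans_of ltp hbc1 hab1, htr c b a hbc2 hab2⟩⟩
  haveI h3 : IsTrichotomous X (flipRel ltp A) := ⟨fun a' b' hab hba => (((show ∀ a b, flipRel ltp A a b ∨ a = b ∨ flipRel ltp A b a by
    intro a b
    rcases trichotomous_of ltp a b with h|h|h
    · by_cases hA : A a b
      · exact Or.inr (Or.inr (Or.inr ⟨h, hA⟩))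
      · exact Or.inl (Or.inl ⟨h, hA⟩)
    · exact Or.inr (Or.inl h)
    · by_cases hA : A b a
      · exact Or.inl (Or.inr ⟨h, hA⟩)
      · exact Or.inr (Or.inr (Or.inl ⟨h, hA⟩))) a' b').resolve_left hab).resolve_right hba⟩
  haveI h4 : IsStrictOrder X (flipRel ltp A) := ⟨⟩
  exact ⟨⟩

lemma invSet_biclosed (q : X → X → Prop) [IsStrictTotalOrder X q] :
    Biclosed ltp (invSet ltp q) := by
  refine ⟨fun x y h => h.1, ?_, ?_⟩
  · rintro x y z ⟨hxy, hq1⟩ ⟨hyz, hq2⟩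
    refine ⟨trans_of ltp hxy hyz, fun hq3 => ?_⟩
    have hyx : q y x := sto_of_not q (ltp_ne ltp hxy) hq1
    have hzy : q z y := sto_of_not q (ltp_ne ltp hyz) hq2
    exact hq1 (trans_of q hq3 hzy)
  · rintro x y z hxy hyz ⟨hxz, hq⟩
    by_cases h1 : q x y
    · by_cases h2 : q y z
      · exact absurd (trans_of q h1 h2) hq
      · exact Or.inr ⟨hyz, h2⟩
    · exact Or.inl ⟨hxy, h1⟩

lemma coInv_biclosed (q : X → X → Prop) [IsStrictTotalOrder X q] :
    Biclosed ltp (fun x y => ltp x y ∧ q x y) := by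
  refine ⟨fun x y h => h.1, ?_, ?_⟩
  · rintro x y z ⟨hxy, hq1⟩ ⟨hyz, hq2⟩
    exact ⟨trans_of ltp hxy hyz, trans_of q hq1 hq2⟩
  · rintro x y z hxy hyz ⟨hxz, hq⟩
    by_cases h1 : q x y
    · exact Or.inl ⟨hxy, h1⟩
    · have : q y x := sto_of_not q (ltp_ne ltp hxy) h1
      exact Or.inr ⟨hyz, trans_of q this hq⟩

lemma compl_biclosed {B : X → X → Prop} (hB : Biclosed ltp B) :
    Biclosed ltp (fun x y => ltp x y ∧ ¬ B x y) := by
  obtain ⟨hsub, htr, hco⟩ := hB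
  refine ⟨fun x y h => h.1, ?_, ?_⟩
  · rintro x y z ⟨hxy, h1⟩ ⟨hyz, h2⟩
    exact ⟨trans_of ltp hxy hyz, fun h => (hco x y z hxy hyz h).elim h1 h2⟩
  · rintro x y z hxy hyz ⟨hxz, h⟩
    by_cases h1 : B x y
    · refine Or.inr ⟨hyz, fun h2 => h (htr x y z h1 h2)⟩
    · exact Or.inl ⟨hxy, h1⟩

/-- Key lemma: transitive closure of a union of biclosed sets is biclosed. -/
lemma transGen_biclosed {U : X → X → Prop}
    (h : ∀ x y, U x y → ∃ A, Biclosed ltp A ∧ A x y ∧ ∀ a b, A a b → U a b) :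
    Biclosed ltp (Relation.TransGen U) := by
  refine ⟨?_, fun x y z h1 h2 => h1.trans h2, ?_⟩
  · intro x y hxy
    induction hxy with
    | single h1 =>
      obtain ⟨A, hA, hxy, _⟩ := h _ _ h1
      exact hA.1 _ _ hxy
    | tail h1 h2 ih =>
      obtain ⟨A, hA, hxy, _⟩ := h _ _ h2
      exact trans_of ltp ih (hA.1 _ _ hxy)
  · intro x y z hxy hyz hxz
    induction hxz generalizing y with
    | single h1 =>
      obtain ⟨A, hA, hxz', hAU⟩ := h _ _ h1
      rcases hA.2.2 x y _ hxy hyz hxz' with hc | hc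
      · exact Or.inl (Relation.TransGen.single (hAU _ _ hc))
      · exact Or.inr (Relation.TransGen.single (hAU _ _ hc))
    | @tail b c h1 h2 ih =>
      rcases trichotomous_of ltp y b with hyb | hyb | hyb
      · rcases ih y hxy hyb with hc | hc
        · exact Or.inl hc
        · exact Or.inr (hc.tail h2)
      · subst hyb; exact Or.inl h1
      · obtain ⟨A, hA, hbc, hAU⟩ := h _ _ h2
        rcases hA.2.2 b y c hyb hyz hbc with hc | hc
        · exact Or.inl (h1.tail (hAU _ _ hc))
        · exact Or.inr (Relation.TransGen.single (hAU _ _ hc))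

end Stmt1Aux

open Stmt1Aux in
/-- `(P, ≤^p)` is a complete lattice: it is a partial order in which every
subset has a least upper bound and a greatest lower bound. -/
theorem stmt1 {X : Type*} (ltp : X → X → Prop) [IsStrictTotalOrder X ltp] :
    (∀ q, OrdLe ltp q q) ∧
    (∀ q r s, OrdLe ltp q r → OrdLe ltp r s → OrdLe ltp q s) ∧
    (∀ q r, OrdLe ltp q r → OrdLe ltp r q → q = r) ∧
    (∀ S : Set {r : X → X → Prop // IsStrictTotalOrder X r},
      ∃ j, (∀ s ∈ S, OrdLe ltp s j) ∧ ∀ b, (∀ s ∈ S, OrdLe ltp s b) → OrdLe ltp j b) ∧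
    (∀ S : Set {r : X → X → Prop // IsStrictTotalOrder X r},
      ∃ m, (∀ s ∈ S, OrdLe ltp m s) ∧ ∀ b, (∀ s ∈ S, OrdLe ltp b s) → OrdLe ltp b m) := by
  classical
  refine ⟨fun q x y _ h => h,
    fun q r s h1 h2 x y hp hs => h1 x y hp (h2 x y hp hs), ?_, ?_, ?_⟩
  · -- antisymmetry
    intro q r h1 h2
    haveI := q.2; haveI := r.2
    apply Subtype.ext
    funext x y
    apply propext
    constructor
    · intro hq
      rcases trichotomous_of ltp x y with h|h|h
      · exact h2 x y h hq
      · exact absurd (h ▸ hq) (irrefl_of q.val y)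
      · by_contra hnr
        have hryx : r.val y x := sto_of_not r.val (Ne.symm (ltp_ne ltp h)) hnr
        exact sto_asymm q.val hq (h1 y x h hryx)
    · intro hr
      rcases trichotomous_of ltp x y with h|h|h
      · exact h1 x y h hr
      · exact absurd (h ▸ hr) (irrefl_of r.val y)
      · by_contra hnq
        have hqyx : q.val y x := sto_of_not q.val (Ne.symm (ltp_ne ltp h)) hnq
        exact sto_asymm r.val hr (h2 y x h hqyx)
  · -- suprema
    intro S
    set U : X → X → Prop := fun x y => ∃ s ∈ S, invSet ltp s.val x y with hUdef
    have hbc : Biclosed ltp (Relation.TransGen U) := by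
      apply transGen_biclosed
      rintro x y ⟨s, hs, hxy⟩
      haveI := s.2
      exact ⟨invSet ltp s.val, invSet_biclosed ltp s.val, hxy,
        fun a b hab => ⟨s, hs, hab⟩⟩
    refine ⟨⟨flipRel ltp (Relation.TransGen U), flip_sto ltp hbc⟩, ?_, ?_⟩
    · intro s hs x y hxy hj
      haveI := s.2
      rcases hj with ⟨_, hnt⟩ | ⟨hyx, _⟩
      · by_contra hns
        exact hnt (Relation.TransGen.single ⟨s, hs, hxy, hns⟩)
      · exact absurd hyx (ltp_asymm ltp hxy)
    · intro b hb x y hxy hbxy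
      haveI := b.2
      refine Or.inl ⟨hxy, fun ht => ?_⟩
      have hsubb : ∀ a c, Relation.TransGen U a c → invSet ltp b.val a c := by
        intro a c h
        induction h with
        | single h1 =>
          obtain ⟨s, hs, hac, hns⟩ := h1
          exact ⟨hac, fun hbac => hns (hb s hs _ _ hac hbac)⟩
        | tail h1 h2 ih =>
          obtain ⟨s, hs, hac, hns⟩ := h2
          haveI := b.2
          exact (invSet_biclosed ltp b.val).2.1 _ _ _ ih
            ⟨hac, fun hbac => hns (hb s hs _ _ hac hbac)⟩
      exact (hsubb x y ht).2 hbxy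
  · -- infima
    intro S
    set U : X → X → Prop := fun x y => ∃ s ∈ S, ltp x y ∧ s.val x y with hUdef
    have hbcB : Biclosed ltp (Relation.TransGen U) := by
      apply transGen_biclosed
      rintro x y ⟨s, hs, hxy, hsxy⟩
      haveI := s.2
      exact ⟨fun a b => ltp a b ∧ s.val a b, coInv_biclosed ltp s.val, ⟨hxy, hsxy⟩,
        fun a b hab => ⟨s, hs, hab⟩⟩
    have hbcC : Biclosed ltp (fun x y => ltp x y ∧ ¬ Relation.TransGen U x y) :=
      compl_biclosed ltp hbcB
    refine ⟨⟨flipRel ltp _, flip_sto ltp hbcC⟩, ?_, ?_⟩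
    · intro s hs x y hxy hsxy
      exact Or.inl ⟨hxy, fun hC => hC.2 (Relation.TransGen.single ⟨s, hs, hxy, hsxy⟩)⟩
    · intro b hb x y hxy hm
      haveI := b.2
      have hB : Relation.TransGen U x y := by
        rcases hm with ⟨_, hnC⟩ | ⟨hyx, _⟩
        · by_contra h; exact hnC ⟨hxy, h⟩
        · exact absurd hyx (ltp_asymm ltp hxy)
      have hsubD : ∀ a c, Relation.TransGen U a c → ltp a c ∧ b.val a c := by
        intro a c h
        induction h with
        | single h1 =>
          obtain ⟨s, hs, hac, hsac⟩ := h1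
          exact ⟨hac, hb s hs _ _ hac hsac⟩
        | tail h1 h2 ih =>
          obtain ⟨s, hs, hac, hsac⟩ := h2
          exact ⟨trans_of ltp ih.1 hac, trans_of b.val ih.2 (hb s hs _ _ hac hsac)⟩
      exact (hsubD x y hB).2
end

section
/- Let g be a permutation of a set X with fixed total order <_p that preserves <_p-structure in the sense below, and let q, r be total orders on X. If <_p, <_q, <_r are all g-invariant (meaning x < y iff g(x) < g(y) for each of these orders), then the join q ∨_p r and meet q ∧_p r in the complete lattice (P, ≤^p) are also g-invariant. -/
/-- A strict order is `g`-invariant if `x < y ↔ g x < g y`. -/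
def GInv {X : Type*} (g : Equiv.Perm X) (r : X → X → Prop) : Prop :=
  ∀ x y, r x y ↔ r (g x) (g y)

lemma conjSTO {X : Type*} (g : X ≃ X) (s : X → X → Prop) (hs : IsStrictTotalOrder X s) :
    IsStrictTotalOrder X (fun x y => s (g x) (g y)) := by
  refine { trichotomous := ?_, irrefl := ?_, trans := ?_ }
  · intro x y
    intro h1 h2
    exact g.injective (hs.trichotomous (g x) (g y) h1 h2)
  · intro x
    exact hs.irrefl (g x)
  · intro x y z hxy hyz
    exact hs.trans _ _ _ hxy hyz

lemma extendGInv {X : Type*} (g : Equiv.Perm X) (ltp s : X → X → Prop)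
    (hp : IsStrictTotalOrder X ltp) (hs : IsStrictTotalOrder X s)
    (h : ∀ a b, ltp a b → (s a b ↔ s (g a) (g b))) : GInv g s := by
  have asymm : ∀ a b, s a b → ¬ s b a := fun a b hab hba =>
    hs.irrefl a (hs.trans _ _ _ hab hba)
  have key : ∀ a b : X, a ≠ b → (s a b ↔ ¬ s b a) := by
    intro a b hab
    constructor
    · exact asymm a b
    · intro hn
      rcases @trichotomous _ s (by haveI := hs; infer_instance) a b with h1 | h1 | h1
      · exact h1
      · exact absurd h1 hab
      · exact absurd h1 hn
  intro a b
  rcases @trichotomous _ ltp (by haveI := hp; infer_instance) a b with h1 | h1 | h1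
  · exact h a b h1
  · subst h1
    constructor
    · intro hh; exact absurd hh (hs.irrefl a)
    · intro hh; exact absurd hh (hs.irrefl (g a))
  · have hab : a ≠ b := fun e => hp.irrefl a (e ▸ h1)
    have hgab : g a ≠ g b := fun e => hab (g.injective e)
    rw [key a b hab, key (g a) (g b) hgab, h b a h1]

/-- If `<_p`, `<_q`, `<_r` are all `g`-invariant, then so are the join
`q ∨_p r` and the meet `q ∧_p r` in the lattice `(P, ≤^p)`. -/
theorem stmt3 {X : Type*} (g : Equiv.Perm X)
    (ltp : X → X → Prop) [IsStrictTotalOrder X ltp]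
    (q r : {r : X → X → Prop // IsStrictTotalOrder X r})
    (hp : GInv g ltp) (hq : GInv g q.val) (hr : GInv g r.val) :
    (∀ j : {r : X → X → Prop // IsStrictTotalOrder X r},
      OrdLe ltp q j → OrdLe ltp r j →
      (∀ b, OrdLe ltp q b → OrdLe ltp r b → OrdLe ltp j b) →
      GInv g j.val) ∧
    (∀ m : {r : X → X → Prop // IsStrictTotalOrder X r},
      OrdLe ltp m q → OrdLe ltp m r →
      (∀ b, OrdLe ltp b q → OrdLe ltp b r → OrdLe ltp b m) →
      GInv g m.val) := by
  have hSTO : IsStrictTotalOrder X ltp := inferInstance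
  have hpInv : GInv (g⁻¹ : Equiv.Perm X) ltp := fun x y => by
    simpa using (hp ((g⁻¹ : Equiv.Perm X) x) ((g⁻¹ : Equiv.Perm X) y)).symm
  have hqInv : GInv (g⁻¹ : Equiv.Perm X) q.val := fun x y => by
    simpa using (hq ((g⁻¹ : Equiv.Perm X) x) ((g⁻¹ : Equiv.Perm X) y)).symm
  have hrInv : GInv (g⁻¹ : Equiv.Perm X) r.val := fun x y => by
    simpa using (hr ((g⁻¹ : Equiv.Perm X) x) ((g⁻¹ : Equiv.Perm X) y)).symm
  constructor
  · intro j hjq hjr hmin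
    set J : {r : X → X → Prop // IsStrictTotalOrder X r} :=
      ⟨fun x y => j.val (g x) (g y), conjSTO g j.val j.property⟩ with hJ
    set J' : {r : X → X → Prop // IsStrictTotalOrder X r} :=
      ⟨fun x y => j.val (g⁻¹ x) (g⁻¹ y), conjSTO (g⁻¹ : Equiv.Perm X) j.val j.property⟩ with hJ'
    have hJub1 : OrdLe ltp q J := by
      intro x y hxy hJxy
      exact (hq x y).mpr (hjq (g x) (g y) ((hp x y).mp hxy) hJxy)
    have hJub2 : OrdLe ltp r J := by
      intro x y hxy hJxy
      exact (hr x y).mpr (hjr (g x) (g y) ((hp x y).mp hxy) hJxy)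
    have hJ'ub1 : OrdLe ltp q J' := by
      intro x y hxy hJxy
      exact (hqInv x y).mpr (hjq _ _ ((hpInv x y).mp hxy) hJxy)
    have hJ'ub2 : OrdLe ltp r J' := by
      intro x y hxy hJxy
      exact (hrInv x y).mpr (hjr _ _ ((hpInv x y).mp hxy) hJxy)
    have h1 := hmin J hJub1 hJub2
    have h2 := hmin J' hJ'ub1 hJ'ub2
    refine extendGInv g ltp j.val hSTO j.property ?_
    intro a b hab
    constructor
    · intro hj
      have := h2 (g a) (g b) ((hp a b).mp hab)
      simpa using this (by simpa [hJ'] using hj)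
    · intro hj
      exact h1 a b hab hj
  · intro m hmq hmr hmax
    set M : {r : X → X → Prop // IsStrictTotalOrder X r} :=
      ⟨fun x y => m.val (g x) (g y), conjSTO g m.val m.property⟩ with hM
    set M' : {r : X → X → Prop // IsStrictTotalOrder X r} :=
      ⟨fun x y => m.val (g⁻¹ x) (g⁻¹ y), conjSTO (g⁻¹ : Equiv.Perm X) m.val m.property⟩ with hM'
    have hMlb1 : OrdLe ltp M q := by
      intro x y hxy hqxy
      exact hmq (g x) (g y) ((hp x y).mp hxy) ((hq x y).mp hqxy)
    have hMlb2 : OrdLe ltp M r := by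
      intro x y hxy hrxy
      exact hmr (g x) (g y) ((hp x y).mp hxy) ((hr x y).mp hrxy)
    have hM'lb1 : OrdLe ltp M' q := by
      intro x y hxy hqxy
      exact hmq _ _ ((hpInv x y).mp hxy) ((hqInv x y).mp hqxy)
    have hM'lb2 : OrdLe ltp M' r := by
      intro x y hxy hrxy
      exact hmr _ _ ((hpInv x y).mp hxy) ((hrInv x y).mp hrxy)
    have h1 := hmax M hMlb1 hMlb2
    have h2 := hmax M' hM'lb1 hM'lb2
    refine extendGInv g ltp m.val hSTO m.property ?_
    intro a b hab
    constructor
    · intro hm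
      exact h1 a b hab hm
    · intro hm
      have := h2 (g a) (g b) ((hp a b).mp hab)
      simpa [hM'] using this (by simpa using hm)
end

section
/- Let < be a translation-invariant total strict order on ℚⁿ. Then there exists a direct sum decomposition ℚⁿ = V₁ ⊕ ⋯ ⊕ V_k and Archimedean translation-invariant total orders <ᵢ on each Vᵢ such that for v = v₁ + ⋯ + v_k (vᵢ ∈ Vᵢ), one has v > 0 iff there exists i with v₁ = ⋯ = v_{i−1} = 0 and vᵢ >ᵢ 0. -/
set_option maxHeartbeats 1000000
set_option synthInstance.maxHeartbeats 400000

namespace Stmt5AuxB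
set_option linter.unusedSectionVars false

variable {G : Type*} [AddCommGroup G] [Module ℚ G]
variable (lt : G → G → Prop) [IsStrictTotalOrder G lt]
variable (hti : ∀ x y z : G, lt x y ↔ lt (x + z) (y + z))

include hti

theorem ltt {x y z : G} (h1 : lt x y) (h2 : lt y z) : lt x z := _root_.trans_of lt h1 h2

theorem lt_irr (x : G) : ¬ lt x x := irrefl_of lt x

theorem lt_asym {x y : G} (h1 : lt x y) (h2 : lt y x) : False := lt_irr lt hti x (_root_.trans_of lt h1 h2)

theorem lt_iff_sub {x y : G} : lt x y ↔ lt 0 (y - x) := by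
  have := hti x y (-x); simpa [sub_eq_add_neg] using this

theorem neg_lt_zero {x : G} (h : lt 0 x) : lt (-x) 0 := by
  have := (hti 0 x (-x)).1 h; simpa using this

theorem zero_lt_neg {x : G} (h : lt x 0) : lt 0 (-x) := by
  have := (hti x 0 (-x)).1 h; simpa using this

theorem neg_lt_neg {x y : G} (h : lt x y) : lt (-y) (-x) := by
  have := (hti x y (-x + -y)).1 h
  simpa [add_comm, add_left_comm, add_assoc] using this

theorem add_lt_add_r {x y : G} (z : G) (h : lt x y) : lt (x + z) (y + z) := (hti x y z).1 h

theorem add_lt_add_l {x y : G} (z : G) (h : lt x y) : lt (z + x) (z + y) := by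
  rw [add_comm z x, add_comm z y]; exact add_lt_add_r lt hti z h

theorem add_lt_add' {a b c d : G} (h1 : lt a b) (h2 : lt c d) : lt (a + c) (b + d) :=
  ltt lt hti (add_lt_add_r lt hti c h1) (add_lt_add_l lt hti b h2)

theorem add_pos' {x y : G} (hx : lt 0 x) (hy : lt 0 y) : lt 0 (x + y) := by
  simpa using add_lt_add' lt hti hx hy

theorem pos_add_nonneg {x y : G} (hx : lt 0 x) (hy : lt 0 y ∨ y = 0) : lt 0 (x + y) := by
  rcases hy with hy | rfl
  · exact add_pos' lt hti hx hy
  · simpa using hx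

theorem nonneg_add_nonneg {x y : G} (hx : lt 0 x ∨ x = 0) (hy : lt 0 y ∨ y = 0) :
    lt 0 (x + y) ∨ x + y = 0 := by
  rcases hx with hx | rfl
  · exact Or.inl (pos_add_nonneg lt hti hx hy)
  · simpa using hy

theorem nsmul_pos' {x : G} (hx : lt 0 x) {m : ℕ} (hm : 0 < m) : lt 0 (m • x) := by
  induction m with
  | zero => omega
  | succ p ih =>
    rcases Nat.eq_zero_or_pos p with rfl | hp
    · simpa using hx
    · rw [succ_nsmul]
      exact add_pos' lt hti (ih hp) hx

theorem nsmul_neg' {x : G} (hx : lt x 0) {m : ℕ} (hm : 0 < m) : lt (m • x) 0 := by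
  have := nsmul_pos' lt hti (zero_lt_neg lt hti hx) hm
  rw [smul_neg] at this
  simpa using neg_lt_zero lt hti this

theorem nsmul_lt_nsmul {x y : G} (h : lt x y) {m : ℕ} (hm : 0 < m) : lt (m • x) (m • y) := by
  induction m with
  | zero => omega
  | succ p ih =>
    rcases Nat.eq_zero_or_pos p with rfl | hp
    · simpa using h
    · rw [succ_nsmul, succ_nsmul]
      exact add_lt_add' lt hti (ih hp) h

theorem smul_pos' {q : ℚ} (hq : 0 < q) {x : G} (hx : lt 0 x) : lt 0 (q • x) := by
  set a := q.num.toNat with ha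
  have ha1 : 0 < a := by
    have := Rat.num_pos.mpr hq
    omega
  have key : q.den • (q • x) = a • x := by
    rw [← Nat.cast_smul_eq_nsmul ℚ, ← Nat.cast_smul_eq_nsmul ℚ, smul_smul]
    congr 1
    have h1 : (a : ℚ) = (q.num : ℚ) := by
      rw [ha]
      exact_mod_cast Int.toNat_of_nonneg (Rat.num_pos.mpr hq).le
    rw [h1]
    rw [mul_comm]
    exact_mod_cast q.mul_den_eq_num
  have hax : lt 0 (a • x) := nsmul_pos' lt hti hx ha1
  rcases trichotomous_of lt 0 (q • x) with h | h | h
  · exact h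
  · exfalso
    rw [← h, smul_zero] at key
    rw [← key] at hax
    exact lt_irr lt hti 0 hax
  · exfalso
    have := nsmul_neg' lt hti h (m := q.den) q.den_pos
    rw [key] at this
    exact lt_asym lt hti hax this

theorem smul_nonneg' {q : ℚ} (hq : 0 ≤ q) {x : G} (hx : lt 0 x ∨ x = 0) :
    lt 0 (q • x) ∨ q • x = 0 := by
  rcases hx with hx | rfl
  · rcases hq.lt_or_eq with h | rfl
    · exact Or.inl (smul_pos' lt hti h hx)
    · simp
  · simp

theorem smul_bound_nonneg {q : ℚ} (hq : 0 ≤ q) {y z : G} (h1 : lt y z) (h2 : lt (-z) y)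
    (hz : lt 0 z) {N : ℕ} (hN : |q| < N) :
    lt (q • y) (N • z) ∧ lt (-(N • z)) (q • y) := by
  have hqN : q < (N : ℚ) := lt_of_le_of_lt (le_abs_self q) hN
  have hNq : lt 0 (((N : ℚ) - q) • z) := smul_pos' lt hti (by linarith) hz
  constructor
  · rw [lt_iff_sub lt hti]
    have e : (N : ℕ) • z - q • y = ((N : ℚ) - q) • z + q • (z - y) := by
      rw [← Nat.cast_smul_eq_nsmul ℚ]
      module
    rw [e]
    refine pos_add_nonneg lt hti hNq (smul_nonneg' lt hti hq (Or.inl ?_))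
    rw [← lt_iff_sub lt hti]; exact h1
  · rw [lt_iff_sub lt hti, sub_neg_eq_add]
    have e : q • y + (N : ℕ) • z = ((N : ℚ) - q) • z + q • (y + z) := by
      rw [← Nat.cast_smul_eq_nsmul ℚ]
      module
    rw [e]
    refine pos_add_nonneg lt hti hNq (smul_nonneg' lt hti hq (Or.inl ?_))
    have := (lt_iff_sub lt hti (x := -z) (y := y)).1 h2
    rwa [sub_neg_eq_add] at this

theorem smul_bound (q : ℚ) {y z : G} (h1 : lt y z) (h2 : lt (-z) y)
    (hz : lt 0 z) {N : ℕ} (hN : |q| < N) :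
    lt (q • y) (N • z) ∧ lt (-(N • z)) (q • y) := by
  rcases le_or_gt 0 q with hq | hq
  · exact smul_bound_nonneg lt hti hq h1 h2 hz hN
  · have h1' : lt (-y) z := by simpa using neg_lt_neg lt hti h2
    have h2' : lt (-z) (-y) := neg_lt_neg lt hti h1
    have habs : |(-q)| < (N : ℚ) := by rwa [abs_neg]
    have := smul_bound_nonneg lt hti (by linarith : (0:ℚ) ≤ -q) h1' h2' hz habs
    rwa [neg_smul, smul_neg, neg_neg] at this

def Cset (x : G) : Set G := {y | ∃ m : ℕ, 0 < m ∧ lt y (m • x) ∧ lt (-(m • x)) y}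

theorem self_mem_Cset {x : G} (hx : lt 0 x) : x ∈ Cset lt x := by
  refine ⟨2, two_pos, ?_, ?_⟩
  · rw [two_nsmul]
    have := add_lt_add_l lt hti x (x := 0) (y := x) hx
    simpa using this
  · exact ltt lt hti (neg_lt_zero lt hti (nsmul_pos' lt hti hx two_pos)) hx

def C (x : G) (hx : lt 0 x) : Submodule ℚ G where
  carrier := Cset lt x
  zero_mem' := ⟨1, one_pos, by simpa using hx, by simpa using neg_lt_zero lt hti hx⟩
  add_mem' := by
    rintro a b ⟨m1, hm1, ha1, ha2⟩ ⟨m2, hm2, hb1, hb2⟩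
    refine ⟨m1 + m2, by omega, ?_, ?_⟩
    · rw [add_nsmul]; exact add_lt_add' lt hti ha1 hb1
    · rw [add_nsmul, neg_add]; exact add_lt_add' lt hti ha2 hb2
  smul_mem' := by
    rintro q y ⟨m, hm, h1, h2⟩
    have hz : lt 0 (m • x) := nsmul_pos' lt hti hx hm
    set N : ℕ := ⌈|q|⌉.toNat + 1 with hNdef
    have hN : |q| < (N : ℚ) := by
      have ha := Int.le_ceil |q|
      have hb : (⌈|q|⌉ : ℚ) ≤ ((⌈|q|⌉.toNat : ℤ) : ℚ) := by
        exact_mod_cast Int.self_le_toNat _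
      have : ((⌈|q|⌉.toNat : ℤ) : ℚ) < (N : ℚ) := by
        rw [hNdef]; push_cast; linarith
      linarith
    obtain ⟨u1, u2⟩ := smul_bound lt hti q h1 h2 hz hN
    refine ⟨m * N, by positivity, ?_, ?_⟩
    · rw [mul_nsmul]; exact u1
    · rw [mul_nsmul]; exact u2

theorem mem_C {x : G} {hx : lt 0 x} {y : G} : y ∈ C lt hti x hx ↔ y ∈ Cset lt x := Iff.rfl

theorem mem_Cset_abs {v : G} (hv : v ≠ 0) : ∃ y, lt 0 y ∧ v ∈ Cset lt y := by
  rcases trichotomous_of lt 0 v with h | h | h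
  · exact ⟨v, h, self_mem_Cset lt hti h⟩
  · exact absurd h.symm hv
  · refine ⟨-v, zero_lt_neg lt hti h, 2, two_pos, ?_, ?_⟩
    · exact ltt lt hti h (nsmul_pos' lt hti (zero_lt_neg lt hti h) two_pos)
    · have : lt (v + v) (v + 0) := add_lt_add_l lt hti v h
      rw [smul_neg, two_nsmul, neg_neg]
      simpa using this

theorem C_le_C {x y : G} (hx : lt 0 x) (hy : lt 0 y) (hxy : x ∈ Cset lt y) :
    C lt hti x hx ≤ C lt hti y hy := by
  rintro z ⟨m, hm, h1, h2⟩
  obtain ⟨M, hM, g1, g2⟩ := hxy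
  refine ⟨M * m, by positivity, ?_, ?_⟩
  · rw [mul_nsmul]
    exact ltt lt hti h1 (nsmul_lt_nsmul lt hti g1 hm)
  · rw [mul_nsmul]
    refine ltt lt hti (neg_lt_neg lt hti (nsmul_lt_nsmul lt hti g1 hm)) h2

theorem C_chain {x y : G} (hx : lt 0 x) (hy : lt 0 y) :
    C lt hti x hx ≤ C lt hti y hy ∨ C lt hti y hy ≤ C lt hti x hx := by
  by_cases hxy : x ∈ Cset lt y
  · exact Or.inl (C_le_C lt hti hx hy hxy)
  · refine Or.inr (C_le_C lt hti hy hx ?_)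
    have h1 : ¬ lt x y := by
      intro h
      exact hxy ⟨1, one_pos, by simpa using h,
        by simpa using ltt lt hti (neg_lt_zero lt hti hy) hx⟩
    have hx2 : lt x (2 • x) := by
      rw [two_nsmul]
      have := add_lt_add_l lt hti x (x := 0) (y := x) hx
      simpa using this
    refine ⟨2, two_pos, ?_, ?_⟩
    · rcases trichotomous_of lt x y with h | h | h
      · exact absurd h h1
      · rw [← h]; exact hx2
      · exact ltt lt hti h hx2
    · exact ltt lt hti (neg_lt_zero lt hti (nsmul_pos' lt hti hx two_pos)) hy

theorem pos_add_of_pos {y : G} (hy : lt 0 y) {a b : G} (ha : a ∉ Cset lt y)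
    (hb : b ∈ Cset lt y) (hpa : lt 0 a) : lt 0 (a + b) := by
  rcases trichotomous_of lt 0 (a + b) with h | h | h
  · exact h
  · exfalso
    have : a = -b := eq_neg_of_add_eq_zero_left h.symm
    have hnb : -b ∈ Cset lt y := (C lt hti y hy).neg_mem hb
    rw [← this] at hnb
    exact ha hnb
  · exfalso
    have hab : lt a (-b) := by
      have := (hti (a + b) 0 (-b)).1 h
      simpa using this
    have hnb : -b ∈ Cset lt y := (C lt hti y hy).neg_mem hb
    obtain ⟨m, hm, g1, g2⟩ := hnb
    refine ha ⟨m, hm, ltt lt hti hab g1, ?_⟩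
    exact ltt lt hti (neg_lt_zero lt hti (nsmul_pos' lt hti hy hm)) hpa

theorem pos_add_iff {y : G} (hy : lt 0 y) {a b : G} (ha : a ∉ Cset lt y)
    (hb : b ∈ Cset lt y) : lt 0 (a + b) ↔ lt 0 a := by
  constructor
  · intro h
    rcases trichotomous_of lt 0 a with h' | h' | h'
    · exact h'
    · exact absurd ((C lt hti y hy).zero_mem : (0:G) ∈ Cset lt y) (h' ▸ ha)
    · exfalso
      have hna : lt 0 (-a) := zero_lt_neg lt hti h'
      have hna' : -a ∉ Cset lt y := fun hmem => ha (by have h := (C lt hti y hy).neg_mem hmem; rw [neg_neg] at h; exact h)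
      have hnb : -b ∈ Cset lt y := (C lt hti y hy).neg_mem hb
      have := pos_add_of_pos lt hti hy hna' hnb hna
      rw [← neg_add] at this
      have h2 := neg_lt_zero lt hti this
      rw [neg_neg] at h2
      exact lt_asym lt hti h h2
  · exact pos_add_of_pos lt hti hy ha hb

theorem main [FiniteDimensional ℚ G] :
    ∃ (k : ℕ) (V : Fin k → Submodule ℚ G)
      (lt' : (i : Fin k) → V i → V i → Prop),
      DirectSum.IsInternal V ∧
      (∀ i, IsStrictTotalOrder (V i) (lt' i)) ∧
      (∀ i (a b c : V i), lt' i a b ↔ lt' i (a + c) (b + c)) ∧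
      (∀ i (x y : V i), lt' i 0 x → ∃ m : ℕ, 0 < m ∧ lt' i y (m • x)) ∧
      (∀ w : (i : Fin k) → V i,
        lt 0 (∑ i, (w i : G)) ↔
          ∃ i, (∀ j, j < i → w j = 0) ∧ lt' i 0 (w i)) := by
  classical
  set S : Set (Submodule ℚ G) := {D | ∃ x, ∃ hx : lt 0 x, D = C lt hti x hx} with hSdef
  have hSchain : ∀ D1 ∈ S, ∀ D2 ∈ S, D1 ≤ D2 ∨ D2 ≤ D1 := by
    rintro _ ⟨x, hx, rfl⟩ _ ⟨y, hy, rfl⟩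
    exact C_chain lt hti hx hy
  have hSfin : S.Finite := by
    apply Set.Finite.of_finite_image (f := fun D : Submodule ℚ G => Module.finrank ℚ ↥D)
    · apply Set.Finite.subset (Set.finite_Iic (Module.finrank ℚ G))
      rintro _ ⟨D, hD, rfl⟩
      exact Submodule.finrank_le D
    · rintro D1 h1 D2 h2 h
      rcases hSchain D1 h1 D2 h2 with hle | hle
      · exact Submodule.eq_of_le_of_finrank_le hle h.ge
      · exact (Submodule.eq_of_le_of_finrank_le hle h.le).symm
  letI : Fintype ↥S := hSfin.fintype
  letI linS : LinearOrder ↥S :=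
    { (inferInstance : PartialOrder ↥S) with
      le_total := fun a b => by
        rcases hSchain a a.2 b b.2 with h | h
        · exact Or.inl (Subtype.coe_le_coe.1 h)
        · exact Or.inr (Subtype.coe_le_coe.1 h)
      toDecidableLE := fun a b => Classical.dec _ }
  set k := Fintype.card ↥S with hk
  set e : Fin k ≃o ↥S := monoEquivOfFin ↥S rfl with he
  set W : ℕ → Submodule ℚ G :=
    fun j => if h : 1 ≤ j ∧ j ≤ k then ((e ⟨j - 1, by omega⟩ : ↥S) : Submodule ℚ G) else ⊥
    with hW
  have hW0 : W 0 = ⊥ := by simp [hW]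
  have hWmono : ∀ {i j : ℕ}, i ≤ j → j ≤ k → W i ≤ W j := by
    intro i j hij hjk
    by_cases hi : 1 ≤ i ∧ i ≤ k
    · have hj : 1 ≤ j ∧ j ≤ k := ⟨by omega, hjk⟩
      simp only [hW]
      rw [dif_pos hi, dif_pos hj]
      exact Subtype.coe_le_coe.2 (e.le_iff_le.2 (by rw [Fin.le_def]; simp; omega))
    · simp only [hW]
      rw [dif_neg hi]
      exact bot_le
  have hWS : ∀ j, 1 ≤ j → j ≤ k → W j ∈ S := by
    intro j h1 h2
    simp only [hW]
    rw [dif_pos ⟨h1, h2⟩]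
    exact (e ⟨j - 1, by omega⟩).2
  have hWtop : W k = ⊤ := by
    rw [eq_top_iff]
    intro v _
    by_cases hv : v = 0
    · rw [hv]; exact (W k).zero_mem
    · obtain ⟨y, hy, hvy⟩ := mem_Cset_abs lt hti hv
      have hCS : C lt hti y hy ∈ S := ⟨y, hy, rfl⟩
      have hk1 : 1 ≤ k := by
        rw [hk]
        haveI : Nonempty ↥S := ⟨⟨_, hCS⟩⟩
        exact Fintype.card_pos
      have hle : C lt hti y hy ≤ W k := by
        set t := e.symm ⟨_, hCS⟩ with ht
        have h1 : C lt hti y hy = ((e t : ↥S) : Submodule ℚ G) := by rw [ht]; simp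
        rw [h1]
        have h2 : W k = ((e ⟨k - 1, by omega⟩ : ↥S) : Submodule ℚ G) := by
          simp only [hW]; rw [dif_pos ⟨hk1, le_refl k⟩]
        rw [h2]
        refine Subtype.coe_le_coe.2 (e.le_iff_le.2 ?_)
        rw [Fin.le_def]
        have := t.isLt
        simp
        omega
      exact hle hvy
  have hUex : ∀ i : Fin k, ∃ u, IsCompl (W (k - 1 - (i : ℕ))) u :=
    fun i => Submodule.exists_isCompl _
  choose U hU using hUex
  set V : Fin k → Submodule ℚ G := fun i => W (k - (i : ℕ)) ⊓ U i with hV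
  have hVle : ∀ i : Fin k, V i ≤ W (k - (i : ℕ)) := fun i => inf_le_left
  have hVinf : ∀ i : Fin k, V i ⊓ W (k - 1 - (i : ℕ)) = ⊥ := by
    intro i
    rw [← le_bot_iff]
    calc V i ⊓ W (k - 1 - (i : ℕ)) ≤ U i ⊓ W (k - 1 - (i : ℕ)) :=
          inf_le_inf_right _ inf_le_right
    _ = ⊥ := by rw [inf_comm]; exact (hU i).disjoint.eq_bot
  have hVsup : ∀ i : Fin k, W (k - 1 - (i : ℕ)) ⊔ V i = W (k - (i : ℕ)) := by
    intro i
    have hle : W (k - 1 - (i : ℕ)) ≤ W (k - (i : ℕ)) := hWmono (by omega) (by omega)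
    calc W (k - 1 - (i : ℕ)) ⊔ V i
        = W (k - 1 - (i : ℕ)) ⊔ (U i ⊓ W (k - (i : ℕ))) := by simp only [hV]; rw [inf_comm]
    _ = (W (k - 1 - (i : ℕ)) ⊔ U i) ⊓ W (k - (i : ℕ)) := (sup_inf_assoc_of_le _ hle).symm
    _ = ⊤ ⊓ W (k - (i : ℕ)) := by rw [(hU i).sup_eq_top]
    _ = W (k - (i : ℕ)) := top_inf_eq _
  set Q : ℕ → Submodule ℚ G := fun m => ⨆ (j : Fin k) (_ : (j : ℕ) < m), V j with hQdef
  have hQ0 : Q 0 = ⊥ := by simp [hQdef]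
  have hQsucc : ∀ m (hm : m < k), Q (m + 1) = Q m ⊔ V ⟨m, hm⟩ := by
    intro m hm
    apply le_antisymm
    · simp only [hQdef]
      apply iSup₂_le
      intro j hj
      rcases Nat.lt_or_ge (j : ℕ) m with h | h
      · exact le_sup_of_le_left (le_iSup₂ (f := fun j _ => V j) j h)
      · have hjm : j = ⟨m, hm⟩ := by apply Fin.ext; simp; omega
        rw [hjm]
        exact le_sup_right
    · apply sup_le
      · simp only [hQdef]
        apply iSup₂_le
        intro j hj
        exact le_iSup₂ (f := fun j _ => V j) j (by omega)
      · simp only [hQdef]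
        exact le_iSup₂ (f := fun j _ => V j) ⟨m, hm⟩ (by simp)
  have hQW : ∀ m, m ≤ k → Q m ⊓ W (k - m) = ⊥ ∧ Q m ⊔ W (k - m) = ⊤ := by
    intro m
    induction m with
    | zero => intro _; rw [hQ0]; simp [hWtop]
    | succ p ih =>
      intro hpk
      obtain ⟨ih1, ih2⟩ := ih (by omega)
      have hpk' : p < k := by omega
      have harith : k - (p + 1) = k - 1 - p := by omega
      have hle : W (k - 1 - p) ≤ W (k - p) := hWmono (by omega) (by omega)
      have hQs := hQsucc p hpk'
      have hip : ((⟨p, hpk'⟩ : Fin k) : ℕ) = p := rfl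
      have step1 : (V ⟨p, hpk'⟩ ⊔ Q p) ⊓ W (k - p) = V ⟨p, hpk'⟩ := by
        have hVW : V ⟨p, hpk'⟩ ≤ W (k - p) := hVle ⟨p, hpk'⟩
        have h := sup_inf_assoc_of_le (Q p) hVW
        rw [h, ih1, sup_bot_eq]
      constructor
      · rw [hQs, harith, ← le_bot_iff]
        have h1 : (Q p ⊔ V ⟨p, hpk'⟩) ⊓ W (k - 1 - p) ≤ V ⟨p, hpk'⟩ ⊓ W (k - 1 - p) := by
          refine le_inf ?_ inf_le_right
          calc (Q p ⊔ V ⟨p, hpk'⟩) ⊓ W (k - 1 - p)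
              ≤ (Q p ⊔ V ⟨p, hpk'⟩) ⊓ W (k - p) := inf_le_inf_left _ hle
          _ = (V ⟨p, hpk'⟩ ⊔ Q p) ⊓ W (k - p) := by rw [sup_comm]
          _ = V ⟨p, hpk'⟩ := step1
        have h2 : V ⟨p, hpk'⟩ ⊓ W (k - 1 - p) = ⊥ := hVinf ⟨p, hpk'⟩
        rw [h2] at h1
        exact h1
      · rw [hQs, harith, sup_assoc]
        have h3 : V ⟨p, hpk'⟩ ⊔ W (k - 1 - p) = W (k - p) := by
          rw [sup_comm]
          exact hVsup ⟨p, hpk'⟩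
        rw [h3]
        exact ih2
  have hiSupV : iSup V = ⊤ := by
    have h1 : Q k = iSup V := by
      simp only [hQdef]
      apply le_antisymm
      · exact iSup₂_le fun j _ => le_iSup V j
      · exact iSup_le fun j => le_iSup₂ (f := fun j _ => V j) j j.isLt
    obtain ⟨_, h2⟩ := hQW k le_rfl
    rw [Nat.sub_self, hW0, sup_bot_eq] at h2
    rw [← h1, h2]
  have hindep : iSupIndep V := by
    intro i
    have hle : W (k - 1 - (i : ℕ)) ≤ W (k - (i : ℕ)) := hWmono (by omega) (by omega)
    have hle2 : (⨆ (j) (_ : j ≠ i), V j) ≤ Q (i : ℕ) ⊔ W (k - 1 - (i : ℕ)) := by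
      apply iSup₂_le
      intro j hj
      rcases lt_trichotomy j i with h | h | h
      · exact le_sup_of_le_left (le_iSup₂ (f := fun j _ => V j) j (show (j : ℕ) < (i : ℕ) from h))
      · exact absurd h hj
      · refine le_sup_of_le_right ?_
        have hij : (i : ℕ) < (j : ℕ) := h
        exact (hVle j).trans (hWmono (by omega) (by omega))
    have hXW : (Q (i : ℕ) ⊔ W (k - 1 - (i : ℕ))) ⊓ W (k - (i : ℕ)) = W (k - 1 - (i : ℕ)) := by
      rw [sup_comm]
      rw [sup_inf_assoc_of_le _ hle, (hQW (i : ℕ) (by omega)).1, sup_bot_eq]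
    refine Disjoint.mono_right hle2 ?_
    rw [disjoint_iff_inf_le]
    have h4 : V i ⊓ (Q (i : ℕ) ⊔ W (k - 1 - (i : ℕ))) ≤ V i ⊓ W (k - 1 - (i : ℕ)) := by
      refine le_inf inf_le_left ?_
      calc V i ⊓ (Q (i : ℕ) ⊔ W (k - 1 - (i : ℕ)))
          ≤ W (k - (i : ℕ)) ⊓ (Q (i : ℕ) ⊔ W (k - 1 - (i : ℕ))) := inf_le_inf_right _ (hVle i)
      _ = (Q (i : ℕ) ⊔ W (k - 1 - (i : ℕ))) ⊓ W (k - (i : ℕ)) := by rw [inf_comm]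
      _ = W (k - 1 - (i : ℕ)) := hXW
    rw [hVinf i] at h4
    exact h4
  have hW_class : ∀ (x : G) (hx : lt 0 x) (m : ℕ), 1 ≤ m → m ≤ k → x ∈ W m → x ∉ W (m - 1) →
      (C lt hti x hx : Submodule ℚ G) = W m := by
    intro x hx m hm1 hm2 hxm hxm'
    obtain ⟨y, hy, hWmC⟩ := hWS m hm1 hm2
    have hxCy : x ∈ Cset lt y := by rw [hWmC] at hxm; exact hxm
    have hCle : C lt hti x hx ≤ W m := by rw [hWmC]; exact C_le_C lt hti hx hy hxCy
    have hCS : C lt hti x hx ∈ S := ⟨x, hx, rfl⟩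
    set t := e.symm ⟨_, hCS⟩ with ht
    have hCt : C lt hti x hx = ((e t : ↥S) : Submodule ℚ G) := by rw [ht]; simp
    have hWm : W m = ((e ⟨m - 1, by omega⟩ : ↥S) : Submodule ℚ G) := by
      simp only [hW]; rw [dif_pos ⟨hm1, hm2⟩]
    have htle : (t : ℕ) ≤ m - 1 := by
      have hh := hCle
      rw [hCt, hWm] at hh
      have := e.le_iff_le.1 (Subtype.coe_le_coe.1 hh)
      rw [Fin.le_def] at this
      simpa using this
    rcases eq_or_lt_of_le htle with heq | hlt
    · have htm : (⟨m - 1, by omega⟩ : Fin k) = t := Fin.ext (by simp [← heq])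
      rw [hCt, hWm, htm]
    · exfalso
      apply hxm'
      have hm2' : 2 ≤ m := by omega
      have hWm1 : W (m - 1) = ((e ⟨m - 1 - 1, by omega⟩ : ↥S) : Submodule ℚ G) := by
        simp only [hW]; rw [dif_pos ⟨by omega, by omega⟩]
      have hle2 : C lt hti x hx ≤ W (m - 1) := by
        rw [hCt, hWm1]
        refine Subtype.coe_le_coe.2 (e.le_iff_le.2 ?_)
        rw [Fin.le_def]
        simp
        omega
      exact hle2 (self_mem_Cset lt hti hx)
  set lt' : (i : Fin k) → V i → V i → Prop := fun i a b => lt (a : G) (b : G) with hlt'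
  have hSTO : ∀ i, IsStrictTotalOrder (V i) (lt' i) := by
    intro i
    haveI h1 : IsTrichotomous (V i) (lt' i) := ⟨fun a b => by
      intro hab hba
      rcases trichotomous_of lt (a : G) (b : G) with h | h | h
      · exact absurd h hab
      · exact Subtype.ext h
      · exact absurd h hba⟩
    haveI h2 : IsTrans (V i) (lt' i) := ⟨fun a b c hab hbc => ltt lt hti hab hbc⟩
    haveI h3 : IsIrrefl (V i) (lt' i) := ⟨fun a => lt_irr lt hti (a : G)⟩
    haveI h4 : IsStrictOrder (V i) (lt' i) := ⟨⟩
    exact ⟨⟩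
  have hti' : ∀ i (a b c : V i), lt' i a b ↔ lt' i (a + c) (b + c) := by
    intro i a b c
    simp only [hlt', Submodule.coe_add]
    exact hti _ _ _
  have harch : ∀ i (x y : V i), lt' i 0 x → ∃ m : ℕ, 0 < m ∧ lt' i y (m • x) := by
    intro i x y hx
    have hx0 : lt 0 (x : G) := by simpa [hlt'] using hx
    have hxne : (x : G) ≠ 0 := by
      intro h
      rw [h] at hx0
      exact lt_irr lt hti 0 hx0
    have hxW : (x : G) ∈ W (k - (i : ℕ)) := hVle i x.2
    have hxW' : (x : G) ∉ W (k - 1 - (i : ℕ)) := by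
      intro hmem
      have hmm : (x : G) ∈ V i ⊓ W (k - 1 - (i : ℕ)) := ⟨x.2, hmem⟩
      rw [hVinf i] at hmm
      exact hxne (by simpa using hmm)
    have harith : k - (i : ℕ) - 1 = k - 1 - (i : ℕ) := by omega
    have hclass := hW_class (x : G) hx0 (k - (i : ℕ)) (by omega) (by omega) hxW
      (by rw [harith]; exact hxW')
    have hyC : (y : G) ∈ Cset lt (x : G) := by
      have hyW : (y : G) ∈ W (k - (i : ℕ)) := hVle i y.2
      rw [← hclass] at hyW
      exact hyW
    obtain ⟨m, hm, hb1, hb2⟩ := hyC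
    refine ⟨m, hm, ?_⟩
    show lt (y : G) ((m • x : V i) : G)
    have hcast : ((m • x : V i) : G) = m • (x : G) := by push_cast; ring_nf
    rw [hcast]
    exact hb1
  have key : ∀ (w : (i : Fin k) → V i) (i : Fin k), (∀ j, j < i → w j = 0) → (w i : G) ≠ 0 →
      (lt 0 (∑ j, (w j : G)) ↔ lt 0 ((w i : G))) := by
    intro w i hzero hne
    have hsum : (∑ j, (w j : G)) = (w i : G) + ∑ j ∈ Finset.univ.erase i, (w j : G) :=
      (Finset.add_sum_erase _ _ (Finset.mem_univ i)).symm
    set t := ∑ j ∈ Finset.univ.erase i, (w j : G) with htd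
    have htW : t ∈ W (k - 1 - (i : ℕ)) := by
      apply Submodule.sum_mem
      intro j hj
      have hji : j ≠ i := Finset.ne_of_mem_erase hj
      rcases lt_or_gt_of_ne hji with h | h
      · rw [hzero j h]
        simp
      · have hij : (i : ℕ) < (j : ℕ) := h
        exact hWmono (by omega) (by omega) (hVle j (w j).2)
    have haW : (w i : G) ∉ W (k - 1 - (i : ℕ)) := by
      intro hmem
      have hmm : (w i : G) ∈ V i ⊓ W (k - 1 - (i : ℕ)) := ⟨(w i).2, hmem⟩
      rw [hVinf i] at hmm
      exact hne (by simpa using hmm)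
    rw [hsum]
    rcases Nat.eq_zero_or_pos (k - 1 - (i : ℕ)) with h0 | h0
    · rw [h0, hW0] at htW
      have ht0 : t = 0 := by simpa using htW
      rw [ht0, add_zero]
    · obtain ⟨y, hy, hWC⟩ := hWS _ h0 (by omega)
      rw [hWC] at htW haW
      exact pos_add_iff lt hti hy haW htW
  refine ⟨k, V, lt', DirectSum.isInternal_submodule_of_iSupIndep_of_iSup_eq_top hindep hiSupV,
    hSTO, hti', harch, ?_⟩
  intro w
  constructor
  · intro h
    have hne : ∃ i, (w i : G) ≠ 0 := by
      by_contra hc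
      push_neg at hc
      have hz : (∑ j, (w j : G)) = 0 := Finset.sum_eq_zero fun j _ => hc j
      rw [hz] at h
      exact lt_irr lt hti 0 h
    obtain ⟨i1, hi1⟩ := hne
    set T := Finset.univ.filter (fun i => (w i : G) ≠ 0) with hT
    have hTne : T.Nonempty := ⟨i1, by rw [hT]; exact Finset.mem_filter.2 ⟨Finset.mem_univ _, hi1⟩⟩
    set i0 := T.min' hTne with hi0
    have hi0T : i0 ∈ T := T.min'_mem hTne
    have hi0mem : (w i0 : G) ≠ 0 := by
      rw [hT] at hi0T
      exact (Finset.mem_filter.1 hi0T).2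
    have hmin : ∀ j, j < i0 → w j = 0 := by
      intro j hj
      by_contra hc
      have hjT : j ∈ T := by
        simp only [hT, Finset.mem_filter, Finset.mem_univ, true_and]
        intro hcc
        exact hc (by exact_mod_cast Subtype.ext hcc)
      exact absurd (T.min'_le j hjT) (not_le.2 hj)
    refine ⟨i0, hmin, ?_⟩
    have := (key w i0 hmin hi0mem).1 h
    show lt ((0 : V i0) : G) ((w i0 : G))
    simpa using this
  · rintro ⟨i, hz, hpos⟩
    have hpos' : lt 0 ((w i : G)) := by
      have : lt ((0 : V i) : G) ((w i : G)) := hpos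
      simpa using this
    have hne : (w i : G) ≠ 0 := by
      intro hh
      rw [hh] at hpos'
      exact lt_irr lt hti 0 hpos'
    exact (key w i hz hne).2 hpos'

end Stmt5AuxB

/-- Classification of translation-invariant total strict orders on `ℚⁿ`:
there is a direct sum decomposition `ℚⁿ = V₁ ⊕ ⋯ ⊕ V_k` with Archimedean
translation-invariant total orders `<ᵢ` on each `Vᵢ` such that
`v = v₁ + ⋯ + v_k > 0` iff `0 = v₁ = ⋯ = v_{i-1} <ᵢ vᵢ` for some `i`. -/
theorem stmt5 (n : ℕ) (lt : (Fin n → ℚ) → (Fin n → ℚ) → Prop)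
    [IsStrictTotalOrder (Fin n → ℚ) lt]
    (hti : ∀ x y z, lt x y ↔ lt (x + z) (y + z)) :
    ∃ (k : ℕ) (V : Fin k → Submodule ℚ (Fin n → ℚ))
      (lt' : (i : Fin k) → V i → V i → Prop),
      DirectSum.IsInternal V ∧
      (∀ i, IsStrictTotalOrder (V i) (lt' i)) ∧
      (∀ i (a b c : V i), lt' i a b ↔ lt' i (a + c) (b + c)) ∧
      (∀ i (x y : V i), lt' i 0 x → ∃ m : ℕ, 0 < m ∧ lt' i y (m • x)) ∧
      (∀ w : (i : Fin k) → V i,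
        lt 0 (∑ i, (w i : Fin n → ℚ)) ↔
          ∃ i, (∀ j, j < i → w j = 0) ∧ lt' i 0 (w i)) := by
  exact Stmt5AuxB.main lt hti
end

section
/- For a ∈ GL(n,ℤ) let N(a) = {x ∈ ℤⁿ \ {0} : (0 < x ⟺ xa < 0)}, where < is the standard lexicographic order on ℤⁿ. Then for all a, b ∈ GL(n,ℤ), N(ab) = N(a) △ N(b)a⁻¹, the symmetric difference of N(a) and the image of N(b) under right multiplication by a⁻¹. -/
/-- `x > 0` in the standard lexicographic order on `ℤⁿ`. -/
def lexPos {n : ℕ} (x : Fin n → ℤ) : Prop :=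
  ∃ i, (∀ j, j < i → x j = 0) ∧ 0 < x i

/-- `N(a) = {x ∈ ℤⁿ \ {0} : 0 < x ⟺ xa < 0}`. -/
def Nset {n : ℕ} (a : Matrix.GeneralLinearGroup (Fin n) ℤ) : Set (Fin n → ℤ) :=
  {x | x ≠ 0 ∧ (lexPos x ↔ lexPos (-(Matrix.vecMul x (a : Matrix (Fin n) (Fin n) ℤ))))}

/-! For `x ≠ 0` the sign of `x` is the truth value of `lexPos x`, and `x ∈ N(a)` says that `a`
flips it: `lexPos x ≠ lexPos (x a)`. Along `x ↦ x a ↦ x a b`, the sign flips under `a b` exactly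
when it flips under exactly one of the two steps, which is the symmetric difference. -/

open Matrix

section GeneralLinearGroup

variable {m R : Type*} [Fintype m] [DecidableEq m] [Semiring R]

lemma vecMul_vecMul_inv (a : GL m R) (x : m → R) :
    x ᵥ* (a : Matrix m m R) ᵥ* ((a⁻¹ : GL m R) : Matrix m m R) = x := by
  rw [vecMul_vecMul, ← Units.val_mul, mul_inv_cancel, Units.val_one, vecMul_one]

lemma vecMul_inv_vecMul (a : GL m R) (x : m → R) :
    x ᵥ* ((a⁻¹ : GL m R) : Matrix m m R) ᵥ* (a : Matrix m m R) = x := by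
  simpa only [inv_inv] using vecMul_vecMul_inv a⁻¹ x

lemma vecMul_eq_zero_iff (a : GL m R) {x : m → R} : x ᵥ* (a : Matrix m m R) = 0 ↔ x = 0 := by
  refine ⟨fun h => ?_, fun h => by rw [h, zero_vecMul]⟩
  rw [← vecMul_vecMul_inv a x, h, zero_vecMul]

lemma image_vecMul_inv (a : GL m R) (S : Set (m → R)) :
    (fun x => x ᵥ* ((a⁻¹ : GL m R) : Matrix m m R)) '' S = (fun x => x ᵥ* (a : Matrix m m R)) ⁻¹' S :=
  congrFun (Set.image_eq_preimage_of_inverse (g := (· ᵥ* (a : Matrix m m R)))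
    (vecMul_inv_vecMul a) (vecMul_vecMul_inv a)) S

end GeneralLinearGroup

lemma lexPos_iff_pos_toLex {n : ℕ} (x : Fin n → ℤ) : lexPos x ↔ 0 < toLex x :=
  exists_congr fun _ => and_congr_left' (forall₂_congr fun _ _ => eq_comm)

lemma lexPos_neg_iff {n : ℕ} {v : Fin n → ℤ} (hv : v ≠ 0) : lexPos (-v) ↔ ¬ lexPos v := by
  rw [lexPos_iff_pos_toLex, lexPos_iff_pos_toLex, toLex_neg, neg_pos]
  exact ⟨lt_asymm, fun h => (not_lt.mp h).lt_of_ne (by simpa using hv)⟩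

lemma mem_Nset_iff {n : ℕ} (a : GL (Fin n) ℤ) {x : Fin n → ℤ} :
    x ∈ Nset a ↔ x ≠ 0 ∧ Xor (lexPos x) (lexPos (x ᵥ* (a : Matrix (Fin n) (Fin n) ℤ))) := by
  rw [Nset, Set.mem_ofPred_eq, xor_iff_iff_not]
  refine and_congr_right fun hx => ?_
  rw [lexPos_neg_iff ((vecMul_eq_zero_iff a).not.mpr hx)]

/-- `N(ab) = N(a) △ N(b)·a⁻¹`. -/
theorem stmt6 {n : ℕ} (a b : Matrix.GeneralLinearGroup (Fin n) ℤ) :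
    Nset (a * b) =
      symmDiff (Nset a)
        ((fun x => Matrix.vecMul x ((a⁻¹ : Matrix.GeneralLinearGroup (Fin n) ℤ) :
            Matrix (Fin n) (Fin n) ℤ)) '' Nset b) := by
  ext x
  rw [Set.mem_symmDiff, image_vecMul_inv, Set.mem_preimage, mem_Nset_iff, mem_Nset_iff,
    mem_Nset_iff, Units.val_mul, ← vecMul_vecMul, Ne, Ne, vecMul_eq_zero_iff]
  simp only [Xor]
  tauto
end

section
/- In a pseudo-Garside germ (G, H, ≤, w₀), for all a, b ∈ G: a ≲ ab if and only if b ≲ a⁻¹w₀. -/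
/-- A pseudo-Garside germ `(G, H, ≤, w₀)`: groups `H ⊆ G`, a lattice order on
`G/H` (encoded by the preorder `lesim` on `G`, writing `a ≲ b` for `aH ≤ bH`)
with least element `H` and greatest element `w₀H`, satisfying (PG2) and (PG3).
`a*b` is defined (and equals `ab`) iff `lesim a (a*b)`. -/
structure PseudoGarsideGerm (G : Type*) [Group G] where
  H : Subgroup G
  lesim : G → G → Prop
  w₀ : G
  refl : ∀ a, lesim a a
  trans : ∀ a b c, lesim a b → lesim b c → lesim a c
  /-- `≤` is antisymmetric as an order on cosets. -/
  antisymm : ∀ a b, lesim a b → lesim b a → a⁻¹ * b ∈ H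
  /-- `lesim` only depends on the cosets. -/
  coset_congr : ∀ a b h h', h ∈ H → h' ∈ H → lesim a b → lesim (a * h) (b * h')
  /-- `H` is the least element. -/
  least : ∀ a, lesim 1 a
  /-- `w₀H` is the greatest element. -/
  greatest : ∀ a, lesim a w₀
  /-- Any two cosets have a join. -/
  sup_exists : ∀ a b, ∃ d, lesim a d ∧ lesim b d ∧ ∀ e, lesim a e → lesim b e → lesim d e
  /-- Any two cosets have a meet. -/
  inf_exists : ∀ a b, ∃ d, lesim d a ∧ lesim d b ∧ ∀ e, lesim e a → lesim e b → lesim e d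
  /-- (PG2): `(a*b)*c` is defined iff `a*(b*c)` is. -/
  pg2 : ∀ a b c, (lesim a (a * b) ∧ lesim (a * b) (a * b * c)) ↔
    (lesim b (b * c) ∧ lesim a (a * b * c))
  /-- (PG3): `a ≲ b` iff `w₀aw₀⁻¹ ≲ w₀bw₀⁻¹`. -/
  pg3 : ∀ a b, lesim a b ↔ lesim (w₀ * a * w₀⁻¹) (w₀ * b * w₀⁻¹)

namespace PseudoGarsideGerm

variable {G : Type*} [Group G] (Γ : PseudoGarsideGerm G)

theorem lesim_mul_iff_of_mul_mul_eq_w₀ {a b c : G} (habc : a * b * c = Γ.w₀) :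
    Γ.lesim a (a * b) ↔ Γ.lesim b (b * c) := by
  simpa only [habc, Γ.greatest, and_true] using Γ.pg2 a b c

end PseudoGarsideGerm

/-- In a pseudo-Garside germ, `a ≲ ab` iff `b ≲ a⁻¹w₀`. -/
theorem stmt10 {G : Type*} [Group G] (Γ : PseudoGarsideGerm G) (a b : G) :
    Γ.lesim a (a * b) ↔ Γ.lesim b (a⁻¹ * Γ.w₀) := by
  have hbc : b * (b⁻¹ * (a⁻¹ * Γ.w₀)) = a⁻¹ * Γ.w₀ := mul_inv_cancel_left b _
  rw [← hbc]
  exact Γ.lesim_mul_iff_of_mul_mul_eq_w₀ (by group)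
end

section
/- In a pseudo-Garside germ (G, H, ≤, w₀), let a, b, c, d ∈ G with bH ∨ cH = dH in the lattice G/H. If a*b and a*c are both defined (i.e., a ≲ ab and a ≲ ac), then a*d is defined (a ≲ ad). -/
namespace PseudoGarsideGerm

variable {G : Type*} [Group G] (Γ : PseudoGarsideGerm G)

/-- Apply (PG2) to `a`, `x` and `x⁻¹a⁻¹w₀`: the product of all three is `w₀`, which dominates
everything, so the two sides of (PG2) reduce to `a ≲ ax` and `x ≲ a⁻¹w₀`. -/
theorem lesim_mul_iff_lesim_inv_mul_w₀ (a x : G) :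
    Γ.lesim a (a * x) ↔ Γ.lesim x (a⁻¹ * Γ.w₀) := by
  have h := Γ.pg2 a x (x⁻¹ * (a⁻¹ * Γ.w₀))
  rw [show a * x * (x⁻¹ * (a⁻¹ * Γ.w₀)) = Γ.w₀ by group,
    show x * (x⁻¹ * (a⁻¹ * Γ.w₀)) = a⁻¹ * Γ.w₀ by group] at h
  exact ⟨fun hx => (h.mp ⟨hx, Γ.greatest _⟩).1, fun hx => (h.mpr ⟨hx, Γ.greatest _⟩).1⟩

end PseudoGarsideGerm

theorem stmt11_general {G : Type*} [Group G] (Γ : PseudoGarsideGerm G) (a b c d : G)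
    (hlub : ∀ e, Γ.lesim b e → Γ.lesim c e → Γ.lesim d e)
    (hab : Γ.lesim a (a * b)) (hac : Γ.lesim a (a * c)) :
    Γ.lesim a (a * d) := by
  rw [Γ.lesim_mul_iff_lesim_inv_mul_w₀] at hab hac ⊢
  exact hlub _ hab hac

/-- If `bH ∨ cH = dH` and `a*b`, `a*c` are defined, then `a*d` is defined. -/
theorem stmt11 {G : Type*} [Group G] (Γ : PseudoGarsideGerm G) (a b c d : G)
    (hbd : Γ.lesim b d) (hcd : Γ.lesim c d)
    (hlub : ∀ e, Γ.lesim b e → Γ.lesim c e → Γ.lesim d e)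
    (hab : Γ.lesim a (a * b)) (hac : Γ.lesim a (a * c)) :
    Γ.lesim a (a * d) :=
  stmt11_general Γ a b c d hlub hab hac
end

section
/- In a pseudo-Garside germ, every ≈-equivalence class in Gⁿ (where ≈ is the equivalence relation generated by the rewriting relation →) contains a greedy element, i.e., an element x such that x → y implies x ∼ y (strong equivalence), where ∼ is the equivalence associated to the preorder generated by →. -/
/-- The rewriting relation on the free monoid `G*` (words over `G`):
`u (a)(b*c) v → u (a*b)(c) v` whenever `a*b` and `b*c` are defined. -/
def GermRw {G : Type*} [Group G] (Γ : PseudoGarsideGerm G) (u v : List G) : Prop :=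
  ∃ (p q : List G) (a b c : G), Γ.lesim a (a * b) ∧ Γ.lesim b (b * c) ∧
    u = p ++ [a, b * c] ++ q ∧ v = p ++ [a * b, c] ++ q

/-- `≲` on words: the reflexive-transitive closure of the rewriting relation. -/
def GermLe {G : Type*} [Group G] (Γ : PseudoGarsideGerm G) : List G → List G → Prop :=
  Relation.ReflTransGen (GermRw Γ)

/-- Strong equivalence `∼` on words: `x ≲ y` and `y ≲ x`. -/
def GermSim {G : Type*} [Group G] (Γ : PseudoGarsideGerm G) (x y : List G) : Prop :=
  GermLe Γ x y ∧ GermLe Γ y x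

/-- A word is greedy if `x → y` implies `x ∼ y`. -/
def Greedy {G : Type*} [Group G] (Γ : PseudoGarsideGerm G) (x : List G) : Prop :=
  ∀ y, GermRw Γ x y → GermSim Γ x y

section Aux
variable {G : Type*} [Group G] (Γ : PseudoGarsideGerm G)

lemma pg2' (a b c : G) : (Γ.lesim a (a*b) ∧ Γ.lesim (a*b) (a*(b*c))) ↔
    (Γ.lesim b (b*c) ∧ Γ.lesim a (a*(b*c))) := by
  have h := Γ.pg2 a b c; rwa [mul_assoc] at h

lemma del (a b : G) : Γ.lesim a (a * b) ↔ Γ.lesim b (a⁻¹ * Γ.w₀) := by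
  have h := Γ.pg2 a b ((a*b)⁻¹ * Γ.w₀)
  have e1 : a * b * ((a*b)⁻¹ * Γ.w₀) = Γ.w₀ := by group
  have e2 : b * ((a*b)⁻¹ * Γ.w₀) = a⁻¹ * Γ.w₀ := by group
  rw [e1, e2] at h
  exact ⟨fun hb => (h.mp ⟨hb, Γ.greatest _⟩).1, fun hb => (h.mpr ⟨hb, Γ.greatest _⟩).1⟩

def GreedyPair (u v : G) : Prop := ∀ b, Γ.lesim u (u * b) → Γ.lesim b v → b ∈ Γ.H

lemma greedify (x v : G) : ∃ f, Γ.lesim x (x*f) ∧ Γ.lesim f v ∧ GreedyPair Γ (x*f) (f⁻¹*v) := by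
  obtain ⟨f, hfv, hfw, hmax⟩ := Γ.inf_exists v (x⁻¹ * Γ.w₀)
  refine ⟨f, (del Γ x f).mpr hfw, hfv, ?_⟩
  intro b h1 h2
  have hA := pg2' Γ f b (b⁻¹*(f⁻¹*v))
  have e1 : b * (b⁻¹*(f⁻¹*v)) = f⁻¹*v := by group
  rw [e1] at hA
  have e2 : f * (f⁻¹ * v) = v := by group
  rw [e2] at hA
  have hA' := hA.mpr ⟨h2, hfv⟩
  have h1' : Γ.lesim (x*f) (x*(f*b)) := by rw [← mul_assoc]; exact h1
  have hB := (pg2' Γ x f b).mp ⟨(del Γ x f).mpr hfw, h1'⟩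
  have hfb : Γ.lesim (f*b) (x⁻¹*Γ.w₀) := (del Γ x (f*b)).mp hB.2
  have hfbf : Γ.lesim (f*b) f := hmax _ hA'.2 hfb
  have hH := Γ.antisymm f (f*b) hA'.1 hfbf
  simpa [inv_mul_cancel_left] using hH

lemma domino (a f b' g c : G)
    (h1 : GreedyPair Γ (f*b') c) (h2 : GreedyPair Γ (a*f) b')
    (haf : Γ.lesim a (a*f)) (hfb : Γ.lesim f (f*b'))
    (hbg : Γ.lesim b' (b'*g)) (hgc : Γ.lesim g c) :
    GreedyPair Γ (a*f) (b'*g) := by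
  intro s hs1 hs2
  have hs1' : Γ.lesim (a*f) (a*(f*s)) := by rw [← mul_assoc]; exact hs1
  have hfs : Γ.lesim f (f*s) := ((pg2' Γ a f s).mp ⟨haf, hs1'⟩).1
  have hsw : Γ.lesim s (f⁻¹*Γ.w₀) := (del Γ f s).mp hfs
  have hbw : Γ.lesim b' (f⁻¹*Γ.w₀) := (del Γ f b').mp hfb
  obtain ⟨m, hsm, hbm, hmin⟩ := Γ.sup_exists s b'
  have hmw : Γ.lesim m (f⁻¹*Γ.w₀) := hmin _ hsw hbw
  have hmbg : Γ.lesim m (b'*g) := hmin _ hs2 hbg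
  have hfm : Γ.lesim f (f*m) := (del Γ f m).mpr hmw
  have e3 : b' * (b'⁻¹*m) = m := by group
  have e4 : (b'⁻¹*m) * ((b'⁻¹*m)⁻¹*g) = g := by group
  have hpg := pg2' Γ b' (b'⁻¹*m) ((b'⁻¹*m)⁻¹*g)
  rw [e4, e3] at hpg
  have hhg : Γ.lesim (b'⁻¹*m) g := (hpg.mp ⟨hbm, hmbg⟩).1
  have hhc : Γ.lesim (b'⁻¹*m) c := Γ.trans _ _ _ hhg hgc
  have hpg2 := pg2' Γ f b' (b'⁻¹*m)
  rw [e3] at hpg2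
  have hfb'm := (hpg2.mpr ⟨hbm, hfm⟩).2
  have e6 : f*m = (f*b')*(b'⁻¹*m) := by group
  rw [e6] at hfb'm
  have hmem : (b'⁻¹*m) ∈ Γ.H := h1 _ hfb'm hhc
  have hmb : Γ.lesim m b' := by
    have := Γ.coset_congr b' b' (b'⁻¹*m) 1 hmem Γ.H.one_mem (Γ.refl b')
    rw [e3, mul_one] at this; exact this
  exact h2 s hs1 (Γ.trans _ _ _ hsm hmb)

end Aux

section Aux2
variable {G : Type*} [Group G] (Γ : PseudoGarsideGerm G)

lemma germRw_cons {u v : List G} (a : G) (h : GermRw Γ u v) : GermRw Γ (a::u) (a::v) := by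
  obtain ⟨p, q, x, y, z, h1, h2, h3, h4⟩ := h
  exact ⟨a::p, q, x, y, z, h1, h2, by simp [h3], by simp [h4]⟩

lemma germLe_cons {u v : List G} (a : G) (h : GermLe Γ u v) : GermLe Γ (a::u) (a::v) :=
  Relation.ReflTransGen.lift (a :: ·) (fun _ _ h => germRw_cons Γ a h) _ _ h

lemma rev {a b c : G} (hb : b ∈ Γ.H) (p q : List G) :
    GermRw Γ (p ++ [a*b, c] ++ q) (p ++ [a, b*c] ++ q) := by
  refine ⟨p, q, a*b, b⁻¹, b*c, ?_, ?_, ?_, ?_⟩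
  · have := Γ.coset_congr a a b 1 hb Γ.H.one_mem (Γ.refl a)
    rw [mul_one] at this
    have e : (a*b)*b⁻¹ = a := by group
    rw [e]; exact this
  · have e : b⁻¹*(b*c) = c := by group
    rw [e]
    have := Γ.coset_congr 1 c b⁻¹ 1 (Γ.H.inv_mem hb) Γ.H.one_mem (Γ.least c)
    rw [one_mul, mul_one] at this; exact this
  · rw [inv_mul_cancel_left]
  · rw [mul_inv_cancel_right]

def SG (x : List G) : Prop := x.Chain' (GreedyPair Γ)

lemma pass : ∀ (v : List G), SG Γ v → ∀ x, ∃ g w,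
    Γ.lesim x (x*g) ∧ (∀ c t, v = c :: t → Γ.lesim g c) ∧
    GermLe Γ (x::v) ((x*g)::w) ∧ SG Γ ((x*g)::w) ∧ (v = [] → g = 1 ∧ w = []) := by
  intro v
  induction v with
  | nil =>
    intro _ x
    refine ⟨1, [], by rw [mul_one]; exact Γ.refl x, by rintro c t ⟨⟩, ?_, ?_, fun _ => ⟨rfl, rfl⟩⟩
    · rw [mul_one]; exact Relation.ReflTransGen.refl
    · exact List.isChain_singleton _
  | cons v₁ v' ih =>
    intro hv x
    obtain ⟨f, hxf, hfv, hgp⟩ := greedify Γ x v₁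
    have hv' : SG Γ v' := hv.tail
    obtain ⟨g, w, hbg, hgc, hle, hsg, hnil⟩ := ih hv' (f⁻¹*v₁)
    refine ⟨f, ((f⁻¹*v₁)*g)::w, hxf, ?_, ?_, ?_, fun h => by cases h⟩
    · rintro c t hct
      injection hct with h1 _
      subst h1; exact hfv
    · have step1 : GermRw Γ (x::v₁::v') ((x*f)::(f⁻¹*v₁)::v') := by
        refine ⟨[], v', x, f, f⁻¹*v₁, hxf, ?_, ?_, rfl⟩
        · rw [mul_inv_cancel_left]; exact hfv
        · simp [mul_inv_cancel_left]
      exact Relation.ReflTransGen.head step1 (germLe_cons Γ (x*f) hle)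
    · refine List.IsChain.cons_cons ?_ hsg
      cases v' with
      | nil =>
        obtain ⟨hg1, _⟩ := hnil rfl
        subst hg1
        rw [mul_one]; exact hgp
      | cons c t =>
        have h1 : GreedyPair Γ (f*(f⁻¹*v₁)) c := by
          rw [mul_inv_cancel_left]
          exact (List.isChain_cons_cons.mp hv).1
        have hfb : Γ.lesim f (f*(f⁻¹*v₁)) := by rw [mul_inv_cancel_left]; exact hfv
        exact domino Γ x f (f⁻¹*v₁) g c h1 hgp hxf hfb hbg (hgc c t rfl)

lemma key : ∀ x : List G, ∃ y, GermLe Γ x y ∧ SG Γ y := by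
  intro x
  induction x with
  | nil => exact ⟨[], Relation.ReflTransGen.refl, List.isChain_nil⟩
  | cons a u ih =>
    obtain ⟨v, huv, hv⟩ := ih
    obtain ⟨g, w, _, _, hle, hsg, _⟩ := pass Γ v hv a
    exact ⟨(a*g)::w, (germLe_cons Γ a huv).trans hle, hsg⟩

end Aux2

section Aux3
variable {G : Type*} [Group G] (Γ : PseudoGarsideGerm G)

lemma SG_greedy {x : List G} (hx : SG Γ x) : Greedy Γ x := by
  intro y hr
  obtain ⟨p, q, a, b, c, hab, hbc, hu, hv⟩ := hr
  have hinf : [a, b*c] <:+: x := ⟨p, q, by rw [hu]⟩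
  have hpair : GreedyPair Γ a (b*c) := List.isChain_pair.mp (hx.infix hinf)
  have hb : b ∈ Γ.H := hpair b hab hbc
  constructor
  · exact Relation.ReflTransGen.single ⟨p, q, a, b, c, hab, hbc, hu, hv⟩
  · rw [hu, hv]
    exact Relation.ReflTransGen.single (rev Γ hb p q)

lemma rtg_eqvgen {r : List G → List G → Prop} {a b : List G}
    (h : Relation.ReflTransGen r a b) : Relation.EqvGen r a b := by
  induction h with
  | refl => exact Relation.EqvGen.refl _
  | tail _ h ih => exact Relation.EqvGen.trans _ _ _ ih (Relation.EqvGen.rel _ _ h)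

end Aux3

/-- Every `≈`-equivalence class (the equivalence generated by `→`) contains a
greedy element. -/
theorem stmt13 {G : Type*} [Group G] (Γ : PseudoGarsideGerm G) (x : List G) :
    ∃ y, Relation.EqvGen (GermRw Γ) x y ∧ Greedy Γ y := by
  obtain ⟨y, hle, hsg⟩ := key Γ x
  exact ⟨y, rtg_eqvgen hle, SG_greedy Γ hsg⟩
end

section
/- In a pseudo-Garside germ, every greedy element of Gⁿ is a greatest element (with respect to the preorder ≲ generated by the rewriting relation) of its equivalence class; in particular, any two equivalent greedy elements are strongly equivalent. -/
/-
Two rewrites of the same word can always be joined by one further rewrite on each side: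
disjoint rewrites commute, overlapping ones are resolved with (PG2), and two rewrites
`(a, bc) → (ab, c)`, `(a, b'c') → (ab', c')` at the same place are both continued to
`(ad, d⁻¹bc)` with `dH = bH ∨ b'H`.
Consequently, below a greedy word `x` the set of words `z ≲ x` is closed under rewriting, hence
under `≈`, so every word equivalent to `x` lies below `x`.
-/

namespace Relation

variable {α : Type*} {r : α → α → Prop} {x : α}

theorem reflTransGen_of_rel_of_reflTransGen
    (hconf : ∀ a b c, r a b → r a c → ∃ d, ReflGen r b d ∧ ReflTransGen r c d)
    (hx : ∀ y, r x y → ReflTransGen r y x) {z w : α} (hzx : ReflTransGen r z x) (hzw : r z w) :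
    ReflTransGen r w x := by
  induction hzx using ReflTransGen.head_induction_on generalizing w with
  | refl => exact hx w hzw
  | head hzz' hz'x ih =>
    obtain ⟨t, hz't, hwt⟩ := hconf _ _ _ hzz' hzw
    have htx : ReflTransGen r t x := by
      cases hz't with
      | refl => exact hz'x
      | single h => exact ih h
    exact hwt.trans htx

theorem reflTransGen_of_eqvGen
    (hconf : ∀ a b c, r a b → r a c → ∃ d, ReflGen r b d ∧ ReflTransGen r c d)
    (hx : ∀ y, r x y → ReflTransGen r y x) {y : α} (hxy : EqvGen r x y) :
    ReflTransGen r y x := by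
  suffices ∀ u v, EqvGen r u v → (ReflTransGen r u x ↔ ReflTransGen r v x) from
    (this x y hxy).mp .refl
  intro u v huv
  induction huv with
  | rel u v huv =>
    exact ⟨fun hux => reflTransGen_of_rel_of_reflTransGen hconf hx hux huv, .head huv⟩
  | refl => rfl
  | symm _ _ _ ih => exact ih.symm
  | trans _ _ _ _ _ ih₁ ih₂ => exact ih₁.trans ih₂

end Relation

theorem List.append_pair_append_eq_cases {α : Type*} {p q p' q' : List α} {x y x' y' : α}
    (h : p ++ [x, y] ++ q = p' ++ [x', y'] ++ q') :
    (p = p' ∧ x = x' ∧ y = y' ∧ q = q') ∨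
    (p' = p ++ [x] ∧ y = x' ∧ q = y' :: q') ∨
    (p = p' ++ [x'] ∧ y' = x ∧ q' = y :: q) ∨
    (∃ m, p' = p ++ [x, y] ++ m ∧ q = m ++ [x', y'] ++ q') ∨
    (∃ m, p = p' ++ [x', y'] ++ m ∧ q' = m ++ [x, y] ++ q) := by
  rw [List.append_assoc, List.append_assoc, List.append_eq_append_iff] at h
  rcases h with ⟨m, hm1, hm2⟩ | ⟨m, hm1, hm2⟩
  · rcases m with _ | ⟨u, _ | ⟨v, m⟩⟩
    · left; simp_all
    · right; left; simp_all
    · right; right; right; left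
      exact ⟨m, by simp_all, by simp_all⟩
  · rcases m with _ | ⟨u, _ | ⟨v, m⟩⟩
    · left; simp_all
    · right; right; left; simp_all
    · right; right; right; right
      exact ⟨m, by simp_all, by simp_all⟩

namespace PseudoGarsideGerm

variable {G : Type*} [Group G] (Γ : PseudoGarsideGerm G)

theorem lesim_and_lesim_iff (a x y : G) :
    Γ.lesim a x ∧ Γ.lesim x y ↔ Γ.lesim (a⁻¹ * x) (a⁻¹ * y) ∧ Γ.lesim a y := by
  simpa [mul_assoc] using Γ.pg2 a (a⁻¹ * x) (x⁻¹ * y)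

theorem lesim_mul_iff (a u : G) : Γ.lesim a (a * u) ↔ Γ.lesim u (a⁻¹ * Γ.w₀) := by
  simpa [Γ.greatest] using Γ.lesim_and_lesim_iff a (a * u) Γ.w₀

end PseudoGarsideGerm

namespace GermRw

variable {G : Type*} [Group G] (Γ : PseudoGarsideGerm G)

theorem pair {a b c : G} (hab : Γ.lesim a (a * b)) (hbc : Γ.lesim b (b * c)) :
    GermRw Γ [a, b * c] [a * b, c] :=
  ⟨[], [], a, b, c, hab, hbc, rfl, rfl⟩

variable {Γ}

theorem append_append {u v : List G} (h : GermRw Γ u v) (p q : List G) :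
    GermRw Γ (p ++ u ++ q) (p ++ v ++ q) := by
  obtain ⟨p', q', a, b, c, hab, hbc, rfl, rfl⟩ := h
  exact ⟨p ++ p', q' ++ q, a, b, c, hab, hbc, by simp, by simp⟩

theorem join_append_append {u v : List G} (h : Relation.Join (GermRw Γ) u v) (p q : List G) :
    Relation.Join (GermRw Γ) (p ++ u ++ q) (p ++ v ++ q) :=
  let ⟨t, hut, hvt⟩ := h
  ⟨p ++ t ++ q, hut.append_append p q, hvt.append_append p q⟩

theorem join_of_disjoint {u u' v v' : List G} (hu : GermRw Γ u u') (hv : GermRw Γ v v')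
    (m : List G) : Relation.Join (GermRw Γ) (u' ++ m ++ v) (u ++ m ++ v') :=
  ⟨u' ++ m ++ v', by simpa using hv.append_append (u' ++ m) [],
    by simpa using hu.append_append [] (m ++ v')⟩

variable (Γ)

theorem join_of_overlap {a b c b' c' : G} (hab : Γ.lesim a (a * b)) (hbc : Γ.lesim b (b * c))
    (hbcb' : Γ.lesim (b * c) (b * c * b')) (hb'c' : Γ.lesim b' (b' * c')) :
    Relation.Join (GermRw Γ) [a * b, c, b' * c'] [a, b * c * b', c'] := by
  obtain ⟨hcb', hbcb'⟩ := (Γ.lesim_and_lesim_iff b (b * c) (b * c * b')).mp ⟨hbc, hbcb'⟩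
  simp only [inv_mul_cancel_left, mul_assoc] at hcb' hbcb'
  refine ⟨[a * b, c * b', c'], ?_, ?_⟩
  · simpa using (pair Γ hcb' hb'c').append_append [a * b] []
  · simpa [mul_assoc] using (pair Γ hab hbcb').append_append [] [c']

theorem pair_of_lesim {a b d m : G} (hbd : Γ.lesim b d) (hdm : Γ.lesim d m)
    (had : Γ.lesim a (a * d)) : GermRw Γ [a * b, b⁻¹ * m] [a * d, d⁻¹ * m] := by
  have habd : Γ.lesim (a * b) (a * b * (b⁻¹ * d)) := by
    simpa using ((Γ.lesim_and_lesim_iff a (a * b) (a * d)).mpr ⟨by simpa using hbd, had⟩).2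
  have hdbm : Γ.lesim (b⁻¹ * d) (b⁻¹ * d * (d⁻¹ * m)) := by
    simpa [mul_assoc] using ((Γ.lesim_and_lesim_iff b d m).mp ⟨hbd, hdm⟩).1
  simpa [mul_assoc] using pair Γ habd hdbm

theorem join_of_eq {a b c b' c' : G} (hab : Γ.lesim a (a * b)) (hbc : Γ.lesim b (b * c))
    (hab' : Γ.lesim a (a * b')) (hb'c' : Γ.lesim b' (b' * c')) (h : b * c = b' * c') :
    Relation.Join (GermRw Γ) [a * b, c] [a * b', c'] := by
  obtain ⟨d, hbd, hb'd, hd⟩ := Γ.sup_exists b b'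
  have hdm : Γ.lesim d (b * c) := hd _ hbc (h ▸ hb'c')
  have had : Γ.lesim a (a * d) := (Γ.lesim_mul_iff a d).mpr
    (hd _ ((Γ.lesim_mul_iff a b).mp hab) ((Γ.lesim_mul_iff a b').mp hab'))
  refine ⟨[a * d, d⁻¹ * (b * c)], ?_, ?_⟩
  · simpa using pair_of_lesim Γ hbd hdm had
  · have := pair_of_lesim Γ hb'd (h ▸ hdm) had
    rwa [inv_mul_cancel_left, ← h] at this

theorem join {z u v : List G} (hu : GermRw Γ z u) (hv : GermRw Γ z v) :
    Relation.Join (GermRw Γ) u v := by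
  obtain ⟨p, q, a, b, c, hab, hbc, rfl, rfl⟩ := hu
  obtain ⟨p', q', a', b', c', hab', hb'c', hz, rfl⟩ := hv
  rcases List.append_pair_append_eq_cases hz with ⟨rfl, rfl, h, rfl⟩ | ⟨rfl, rfl, rfl⟩ |
    ⟨rfl, rfl, rfl⟩ | ⟨m, rfl, rfl⟩ | ⟨m, rfl, rfl⟩
  · exact join_append_append (join_of_eq Γ hab hbc hab' hb'c' h) p q
  · simpa using join_append_append (join_of_overlap Γ hab hbc hab' hb'c') p q'
  · simpa using _root_.symm (join_append_append (join_of_overlap Γ hab' hb'c' hab hbc) p' q)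
  · simpa using
      join_append_append (join_of_disjoint (pair Γ hab hbc) (pair Γ hab' hb'c') m) p q'
  · simpa using _root_.symm
      (join_append_append (join_of_disjoint (pair Γ hab' hb'c') (pair Γ hab hbc) m) p' q)

end GermRw

theorem Greedy.germLe_of_eqvGen {G : Type*} [Group G] {Γ : PseudoGarsideGerm G} {x y : List G}
    (hx : Greedy Γ x) (hxy : Relation.EqvGen (GermRw Γ) x y) : GermLe Γ y x :=
  Relation.reflTransGen_of_eqvGen (r := GermRw Γ)
    (fun _ _ _ hb hc => (GermRw.join Γ hb hc).imp fun _ h => ⟨.single h.1, .single h.2⟩)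
    (fun y hy => (hx y hy).2) hxy

/-- Every greedy element is a greatest element (w.r.t. `≲`) of its
`≈`-equivalence class; in particular two equivalent greedy elements are
strongly equivalent. -/
theorem stmt14 {G : Type*} [Group G] (Γ : PseudoGarsideGerm G) (x : List G)
    (hx : Greedy Γ x) :
    ∀ y, Relation.EqvGen (GermRw Γ) x y →
      GermLe Γ y x ∧ (Greedy Γ y → GermSim Γ x y) := by
  intro y hxy
  exact ⟨hx.germLe_of_eqvGen hxy,
    fun hy => ⟨hy.germLe_of_eqvGen (.symm _ _ hxy), hx.germLe_of_eqvGen hxy⟩⟩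
end

section
/- Let B⁺ be the monoid presented by generators r(a) for a ∈ G (a pseudo-Garside germ) and relations r(1) = 1 and r(ab) = r(a)r(b) whenever a ≲ ab. Then every element of B⁺ can be written as r(x₁)⋯r(xₙ) with (x₁,…,xₙ) strongly greedy, and (x₁,…,xₙ) is unique up to strong equivalence. -/
/-- The defining relations of the monoid `B⁺`: `r(ab) = r(a)r(b)` whenever
`a ≲ ab`, and `r(1) = 1`; elements of `B⁺` are words over `G` modulo the
congruence generated by these relations. -/
def PRel {G : Type*} [Group G] (Γ : PseudoGarsideGerm G) (u v : List G) : Prop :=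
  (∃ (p q : List G) (a b : G), Γ.lesim a (a * b) ∧
    u = p ++ [a * b] ++ q ∧ v = p ++ [a, b] ++ q) ∨
  (∃ p q : List G, u = p ++ [1] ++ q ∧ v = p ++ q)

/-- Strong equivalence via `H`:
`(x₁,…,xₙ) ∼ (x₁h₁⁻¹, h₁x₂h₂⁻¹, …, h_{n-1}xₙ)` with `hᵢ ∈ H`. -/
def StrEq {G : Type*} [Group G] (Γ : PseudoGarsideGerm G) (x y : List G) : Prop :=
  x.length = y.length ∧ ∃ h : ℕ → G, h 0 = 1 ∧ h x.length = 1 ∧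
    (∀ i, h i ∈ Γ.H) ∧
    ∀ i < x.length, y.getD i 1 = h i * x.getD i 1 * (h (i + 1))⁻¹

/-- `(x₁,…,xₙ)` is strongly greedy: greedy, `xₙ ∉ H` if `n ≥ 2`, and
`x₁ ≠ 1` if `n = 1`. -/
def StronglyGreedy {G : Type*} [Group G] (Γ : PseudoGarsideGerm G) (x : List G) : Prop :=
  Greedy Γ x ∧ (2 ≤ x.length → x.getD (x.length - 1) 1 ∉ Γ.H) ∧
    (x.length = 1 → x ≠ [1])


namespace PseudoGarsideGerm

variable {G : Type*} [Group G] {Γ : PseudoGarsideGerm G}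

/-- The germ product `a*b` is defined. -/
def D (Γ : PseudoGarsideGerm G) (a b : G) : Prop := Γ.lesim a (a * b)

lemma lesim_trans {a b c : G} (h1 : Γ.lesim a b) (h2 : Γ.lesim b c) : Γ.lesim a c :=
  Γ.trans _ _ _ h1 h2

lemma mem_H_of_le_one {a : G} (h : Γ.lesim a 1) : a ∈ Γ.H := by
  have := Γ.antisymm 1 a (Γ.least a) h; simpa using this

lemma le_one_of_mem {a : G} (h : a ∈ Γ.H) : Γ.lesim a 1 := by
  have := Γ.coset_congr 1 1 a 1 h Γ.H.one_mem (Γ.refl 1); simpa using this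

lemma le_mulH {a b h : G} (hh : h ∈ Γ.H) (hab : Γ.lesim a b) : Γ.lesim a (b * h) := by
  have := Γ.coset_congr a b 1 h Γ.H.one_mem hh hab; simpa using this

lemma le_of_le_mulH {a b h : G} (hh : h ∈ Γ.H) (hab : Γ.lesim a (b * h)) : Γ.lesim a b := by
  have := Γ.coset_congr a (b * h) 1 h⁻¹ Γ.H.one_mem (Γ.H.inv_mem hh) hab
  simpa [mul_assoc] using this

lemma mulH_le {a b h : G} (hh : h ∈ Γ.H) (hab : Γ.lesim a b) : Γ.lesim (a * h) b := by
  have := Γ.coset_congr a b h 1 hh Γ.H.one_mem hab; simpa using this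

lemma D_iff {a b : G} : Γ.D a b ↔ Γ.lesim b (a⁻¹ * Γ.w₀) := by
  have h := Γ.pg2 a b (b⁻¹ * (a⁻¹ * Γ.w₀))
  have e1 : a * b * (b⁻¹ * (a⁻¹ * Γ.w₀)) = Γ.w₀ := by group
  have e2 : b * (b⁻¹ * (a⁻¹ * Γ.w₀)) = a⁻¹ * Γ.w₀ := by group
  rw [e1, e2] at h
  constructor
  · intro hd; exact (h.1 ⟨hd, Γ.greatest _⟩).1
  · intro hb; exact (h.2 ⟨hb, Γ.greatest _⟩).1

/-- F1 : pull back `≲` along a defined left product. -/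
lemma D_le_mul {b e f : G} (hef : Γ.lesim e f) (hbf : Γ.D b f) :
    Γ.D b e ∧ Γ.lesim (b * e) (b * f) := by
  have h := Γ.pg2 b e (e⁻¹ * f)
  have e1 : e * (e⁻¹ * f) = f := by group
  have e2 : b * e * (e⁻¹ * f) = b * f := by group
  rw [e1, e2] at h
  exact h.2 ⟨hef, hbf⟩

/-- F2 : left cancellation of `≲` along a defined product. -/
lemma le_of_mul_le {b e f : G} (hbe : Γ.D b e) (h : Γ.lesim (b * e) (b * f)) :
    Γ.lesim e f := by
  have h2 := Γ.pg2 b e (e⁻¹ * f)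
  have e1 : e * (e⁻¹ * f) = f := by group
  have e2 : b * e * (e⁻¹ * f) = b * f := by group
  rw [e1, e2] at h2
  exact (h2.1 ⟨hbe, h⟩).1

lemma D_of_memH {h a : G} (hh : h ∈ Γ.H) : Γ.D h a := by
  have := Γ.coset_congr 1 (h * a) h 1 hh Γ.H.one_mem (Γ.least (h * a))
  simpa [D] using this

lemma Hmul_le_Hmul {h a b : G} (hh : h ∈ Γ.H) (hab : Γ.lesim a b) :
    Γ.lesim (h * a) (h * b) :=
  (D_le_mul hab (D_of_memH hh)).2

lemma le_of_Hmul_le {h a b : G} (hh : h ∈ Γ.H) (h2 : Γ.lesim (h * a) (h * b)) :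
    Γ.lesim a b := by
  have := Hmul_le_Hmul (Γ.H.inv_mem hh) h2
  simpa [inv_mul_cancel_left] using this

noncomputable def mu (Γ : PseudoGarsideGerm G) (a b : G) : G :=
  Classical.choose (Γ.inf_exists a b)

lemma mu_le_left (a b : G) : Γ.lesim (Γ.mu a b) a :=
  (Classical.choose_spec (Γ.inf_exists a b)).1

lemma mu_le_right (a b : G) : Γ.lesim (Γ.mu a b) b :=
  (Classical.choose_spec (Γ.inf_exists a b)).2.1

lemma le_mu {a b e : G} (h1 : Γ.lesim e a) (h2 : Γ.lesim e b) : Γ.lesim e (Γ.mu a b) :=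
  (Classical.choose_spec (Γ.inf_exists a b)).2.2 e h1 h2

noncomputable def jn (Γ : PseudoGarsideGerm G) (a b : G) : G :=
  Classical.choose (Γ.sup_exists a b)

lemma left_le_jn (a b : G) : Γ.lesim a (Γ.jn a b) :=
  (Classical.choose_spec (Γ.sup_exists a b)).1

lemma right_le_jn (a b : G) : Γ.lesim b (Γ.jn a b) :=
  (Classical.choose_spec (Γ.sup_exists a b)).2.1

lemma jn_le {a b e : G} (h1 : Γ.lesim a e) (h2 : Γ.lesim b e) : Γ.lesim (Γ.jn a b) e :=
  (Classical.choose_spec (Γ.sup_exists a b)).2.2 e h1 h2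

end PseudoGarsideGerm

namespace PseudoGarsideGerm

variable {G : Type*} [Group G] {Γ : PseudoGarsideGerm G}

/-- `(a, y)` is a tight (greedy) pair: nothing nontrivial can pass from `y` to `a`. -/
def TightPair (Γ : PseudoGarsideGerm G) (a y : G) : Prop :=
  ∀ e, Γ.lesim e y → Γ.D a e → e ∈ Γ.H

/-- A word is a tight chain if all adjacent pairs are tight. -/
def TC (Γ : PseudoGarsideGerm G) (l : List G) : Prop := l.Chain' Γ.TightPair

/-- `c` is absorbable along the word `r`. -/
def Abs (Γ : PseudoGarsideGerm G) : List G → G → Prop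
  | [], c => c ∈ Γ.H
  | r₁ :: r', c => Γ.lesim c r₁ ∨ ∃ c₂, c = r₁ * c₂ ∧ Γ.D r₁ c₂ ∧ Γ.Abs r' c₂

lemma absorb {r : List G} {z c d : G} (htc : Γ.TC (z :: r)) (habs : Γ.Abs r c)
    (hdc : Γ.lesim d c) (hzd : Γ.D z d) : d ∈ Γ.H := by
  induction r generalizing z c d with
  | nil => exact mem_H_of_le_one (lesim_trans hdc (le_one_of_mem habs))
  | cons r₁ r' ih =>
    have htp : Γ.TightPair z r₁ := (List.isChain_cons_cons.1 htc).1
    have htc' : Γ.TC (r₁ :: r') := (List.isChain_cons_cons.1 htc).2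
    rcases habs with hcr | ⟨c₂, rfl, hD, habs'⟩
    · exact htp d (lesim_trans hdc hcr) hzd
    · -- d ≲ r₁ * c₂
      have hdf : Γ.lesim d (Γ.jn d r₁) := left_le_jn _ _
      have hrf : Γ.lesim r₁ (Γ.jn d r₁) := right_le_jn _ _
      have hfle : Γ.lesim (Γ.jn d r₁) (r₁ * c₂) := jn_le hdc hD
      have hrd₂ : Γ.D r₁ (r₁⁻¹ * Γ.jn d r₁) := by
        show Γ.lesim r₁ (r₁ * (r₁⁻¹ * Γ.jn d r₁))
        simpa [mul_inv_cancel_left] using hrf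
      have hd₂c₂ : Γ.lesim (r₁⁻¹ * Γ.jn d r₁) c₂ :=
        le_of_mul_le hrd₂ (by simpa [mul_inv_cancel_left] using hfle)
      have hd₂H : (r₁⁻¹ * Γ.jn d r₁) ∈ Γ.H := ih htc' habs' hd₂c₂ hrd₂
      have hdr₁ : Γ.lesim d r₁ := le_of_le_mulH hd₂H (by
        simpa [mul_inv_cancel_left] using hdf)
      exact htp d hdr₁ hzd

/-- The heart of the domino argument. -/
lemma tight_step {x u₁ b u₁' c' : G} {r : List G}
    (hbl : Γ.lesim b u₁) (hbr : Γ.lesim b (x⁻¹ * Γ.w₀))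
    (hbmin : ∀ e, Γ.lesim e u₁ → Γ.lesim e (x⁻¹ * Γ.w₀) → Γ.lesim e b)
    (hu' : u₁ = b * u₁')
    (htc : Γ.TC (u₁ :: r)) (habs : Γ.Abs r c') (hu₁'c' : Γ.D u₁' c') :
    Γ.TightPair (x * b) (u₁' * c') := by
  intro e he hDe
  have hxb : Γ.D x b := D_iff.2 hbr
  have hp := (Γ.pg2 x b e).1 ⟨hxb, hDe⟩
  have hbe : Γ.D b e := hp.1
  have hxbe : Γ.D x (b * e) := by
    show Γ.lesim x (x * (b * e)); simpa [mul_assoc] using hp.2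
  have hbu' : Γ.D b u₁' := by show Γ.lesim b (b * u₁'); rwa [← hu']
  have hef : Γ.lesim e (Γ.jn e u₁') := left_le_jn _ _
  have hu'f : Γ.lesim u₁' (Γ.jn e u₁') := right_le_jn _ _
  have hbf : Γ.D b (Γ.jn e u₁') := D_iff.2 (jn_le (D_iff.1 hbe) (D_iff.1 hbu'))
  have hfle : Γ.lesim (Γ.jn e u₁') (u₁' * c') := jn_le he hu₁'c'
  have hu'd : Γ.D u₁' (u₁'⁻¹ * Γ.jn e u₁') := by
    show Γ.lesim u₁' (u₁' * (u₁'⁻¹ * Γ.jn e u₁'))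
    simpa [mul_inv_cancel_left] using hu'f
  have hdc' : Γ.lesim (u₁'⁻¹ * Γ.jn e u₁') c' :=
    le_of_mul_le hu'd (by simpa [mul_inv_cancel_left] using hfle)
  have hu₁d : Γ.D u₁ (u₁'⁻¹ * Γ.jn e u₁') := by
    have h2 := (D_le_mul hu'f hbf).2
    have e2 : b * Γ.jn e u₁' = b * u₁' * (u₁'⁻¹ * Γ.jn e u₁') := by group
    show Γ.lesim u₁ (u₁ * (u₁'⁻¹ * Γ.jn e u₁'))
    rw [hu', ← e2]; exact h2
  have hdH : (u₁'⁻¹ * Γ.jn e u₁') ∈ Γ.H := absorb htc habs hdc' hu₁d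
  have heu' : Γ.lesim e u₁' :=
    le_of_le_mulH hdH (by simpa [mul_inv_cancel_left] using hef)
  have hbeu : Γ.lesim (b * e) u₁ := by
    have h3 := (D_le_mul heu' hbu').2
    rwa [← hu'] at h3
  have hbeb : Γ.lesim (b * e) b := hbmin _ hbeu (D_iff.1 hxbe)
  exact mem_H_of_le_one (le_of_mul_le hbe (by simpa using hbeb))

open scoped Classical in
/-- Insert a letter on the left of a word. -/
noncomputable def ins (Γ : PseudoGarsideGerm G) : G → List G → List G
  | x, [] => [x]
  | x, u₁ :: r =>
    if (Γ.mu u₁ (x⁻¹ * Γ.w₀))⁻¹ * u₁ ∈ Γ.H then Γ.ins (x * u₁) r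
    else (x * Γ.mu u₁ (x⁻¹ * Γ.w₀)) :: Γ.ins ((Γ.mu u₁ (x⁻¹ * Γ.w₀))⁻¹ * u₁) r

lemma ins_nil (x : G) : Γ.ins x [] = [x] := by simp [ins]

lemma ins_cons_merge {x u₁ : G} {r : List G} (hm : (Γ.mu u₁ (x⁻¹ * Γ.w₀))⁻¹ * u₁ ∈ Γ.H) :
    Γ.ins x (u₁ :: r) = Γ.ins (x * u₁) r := by
  rw [ins]; rw [if_pos hm]

lemma ins_cons_split {x u₁ : G} {r : List G} (hm : (Γ.mu u₁ (x⁻¹ * Γ.w₀))⁻¹ * u₁ ∉ Γ.H) :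
    Γ.ins x (u₁ :: r) =
      (x * Γ.mu u₁ (x⁻¹ * Γ.w₀)) :: Γ.ins ((Γ.mu u₁ (x⁻¹ * Γ.w₀))⁻¹ * u₁) r := by
  rw [ins]; rw [if_neg hm]

lemma D_merge {x u₁ : G} (hm : (Γ.mu u₁ (x⁻¹ * Γ.w₀))⁻¹ * u₁ ∈ Γ.H) : Γ.D x u₁ := by
  have hb : Γ.D x (Γ.mu u₁ (x⁻¹ * Γ.w₀)) := D_iff.2 (mu_le_right _ _)
  have := le_mulH hm hb
  simpa [mul_assoc, D] using this

lemma ins_spec (u : List G) : ∀ x : G, Γ.TC u →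
    Γ.TC (Γ.ins x u) ∧ (Γ.ins x u).prod = x * u.prod ∧
      ∃ c t, Γ.Abs u c ∧ Γ.D x c ∧ Γ.ins x u = (x * c) :: t := by
  induction u with
  | nil =>
    intro x _
    refine ⟨List.isChain_singleton x, by simp [ins_nil], 1, [], Γ.H.one_mem, ?_, by
      simp [ins_nil]⟩
    show Γ.lesim x (x * 1); simpa using Γ.refl x
  | cons u₁ r ih =>
    intro x htc
    have htcr : Γ.TC r := List.IsChain.tail htc
    by_cases hm : (Γ.mu u₁ (x⁻¹ * Γ.w₀))⁻¹ * u₁ ∈ Γ.H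
    · -- merge branch
      obtain ⟨htc', hprod, c₂, t, habs₂, hD₂, heq⟩ := ih (x * u₁) htcr
      have hxu : Γ.D x u₁ := D_merge hm
      have hpg := (Γ.pg2 x u₁ c₂).1 ⟨hxu, hD₂⟩
      refine ⟨by rwa [ins_cons_merge hm], ?_, u₁ * c₂, t, ?_, ?_, ?_⟩
      · rw [ins_cons_merge hm, hprod]; simp [mul_assoc]
      · exact Or.inr ⟨c₂, rfl, hpg.1, habs₂⟩
      · show Γ.lesim x (x * (u₁ * c₂)); simpa [mul_assoc] using hpg.2
      · rw [ins_cons_merge hm, heq]; congr 1; group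
    · -- split branch
      obtain ⟨htc', hprod, c', t, habs', hD', heq⟩ := ih ((Γ.mu u₁ (x⁻¹ * Γ.w₀))⁻¹ * u₁) htcr
      have hu' : u₁ = Γ.mu u₁ (x⁻¹ * Γ.w₀) * ((Γ.mu u₁ (x⁻¹ * Γ.w₀))⁻¹ * u₁) := by group
      have htp : Γ.TightPair (x * Γ.mu u₁ (x⁻¹ * Γ.w₀))
          (((Γ.mu u₁ (x⁻¹ * Γ.w₀))⁻¹ * u₁) * c') :=
        tight_step (mu_le_left _ _) (mu_le_right _ _) (fun e h1 h2 => le_mu h1 h2) hu'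
          htc habs' hD'
      constructor
      · rw [ins_cons_split hm, heq]
        exact List.isChain_cons_cons.2 ⟨htp, heq ▸ htc'⟩
      constructor
      · rw [ins_cons_split hm]
        simp only [List.prod_cons, hprod]
        group
      · exact ⟨Γ.mu u₁ (x⁻¹ * Γ.w₀), Γ.ins ((Γ.mu u₁ (x⁻¹ * Γ.w₀))⁻¹ * u₁) r,
          Or.inl (mu_le_left _ _), D_iff.2 (mu_le_right _ _), ins_cons_split hm⟩

end PseudoGarsideGerm

namespace PseudoGarsideGerm

variable {G : Type*} [Group G] {Γ : PseudoGarsideGerm G}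

noncomputable def norm (Γ : PseudoGarsideGerm G) : List G → List G
  | [] => []
  | x :: t => Γ.ins x (Γ.norm t)

lemma norm_tc (w : List G) : Γ.TC (Γ.norm w) := by
  induction w with
  | nil => exact List.isChain_nil
  | cons x t ih => exact (ins_spec (Γ.norm t) x ih).1

lemma norm_prod (w : List G) : (Γ.norm w).prod = w.prod := by
  induction w with
  | nil => rfl
  | cons x t ih => rw [norm, (ins_spec (Γ.norm t) x (norm_tc t)).2.1, ih]; simp

lemma ins_ne_nil (u : List G) : ∀ x : G, Γ.ins x u ≠ [] := by
  induction u with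
  | nil => intro x; simp [ins_nil]
  | cons u₁ r ih =>
    intro x
    by_cases hm : (Γ.mu u₁ (x⁻¹ * Γ.w₀))⁻¹ * u₁ ∈ Γ.H
    · rw [ins_cons_merge hm]; exact ih _
    · rw [ins_cons_split hm]; simp

lemma ins_last (u : List G) : ∀ x : G, (∀ a ∈ u.getLast?, a ∉ Γ.H) → u ≠ [] →
    ∀ a ∈ (Γ.ins x u).getLast?, a ∉ Γ.H := by
  induction u with
  | nil => intro x _ h; exact absurd rfl h
  | cons u₁ r ih =>
    intro x hP _
    by_cases hm : (Γ.mu u₁ (x⁻¹ * Γ.w₀))⁻¹ * u₁ ∈ Γ.H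
    · rw [ins_cons_merge hm]
      cases r with
      | nil =>
        intro a ha
        rw [ins_nil] at ha
        simp at ha
        subst ha
        have hu₁ : u₁ ∉ Γ.H := hP u₁ (by simp)
        intro hmem
        have hxu : Γ.D x u₁ := D_merge hm
        have hx1 : Γ.lesim x 1 := lesim_trans hxu (le_one_of_mem hmem)
        have hxH : x ∈ Γ.H := mem_H_of_le_one hx1
        have : u₁ = x⁻¹ * (x * u₁) := by group
        exact hu₁ (this ▸ Γ.H.mul_mem (Γ.H.inv_mem hxH) hmem)
      | cons r₁ r' =>
        exact ih (x * u₁) (by intro a ha; exact hP a (by simpa using ha)) (by simp)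
    · rw [ins_cons_split hm]
      cases r with
      | nil =>
        intro a ha
        rw [ins_nil] at ha
        simp at ha
        subst ha
        exact hm
      | cons r₁ r' =>
        intro a ha
        obtain ⟨y, l', hl⟩ := List.exists_cons_of_ne_nil (ins_ne_nil (r₁ :: r') ((Γ.mu u₁ (x⁻¹ * Γ.w₀))⁻¹ * u₁))
        rw [hl, List.getLast?_cons_cons] at ha
        exact ih _ (by intro a' ha'; exact hP a' (by simpa using ha')) (by simp) a (hl ▸ ha)

lemma norm_lastH (w : List G) : 2 ≤ (Γ.norm w).length →
    ∀ a ∈ (Γ.norm w).getLast?, a ∉ Γ.H := by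
  induction w with
  | nil => simp [norm]
  | cons x t ih =>
    rw [norm]
    match hu : Γ.norm t with
    | [] => rw [ins_nil]; simp
    | [g] =>
      by_cases hg : g ∈ Γ.H
      · have hbg : Γ.lesim (Γ.mu g (x⁻¹ * Γ.w₀)) 1 := by
          have := Γ.coset_congr (Γ.mu g (x⁻¹ * Γ.w₀)) g 1 g⁻¹ Γ.H.one_mem (Γ.H.inv_mem hg)
            (mu_le_left g (x⁻¹ * Γ.w₀))
          simpa using this
        have hbH : Γ.mu g (x⁻¹ * Γ.w₀) ∈ Γ.H := mem_H_of_le_one hbg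
        have hm : (Γ.mu g (x⁻¹ * Γ.w₀))⁻¹ * g ∈ Γ.H := Γ.H.mul_mem (Γ.H.inv_mem hbH) hg
        rw [ins_cons_merge hm, ins_nil]
        simp
      · intro _
        exact ins_last [g] x (by simpa using hg) (by simp)
    | g₁ :: g₂ :: u' =>
      intro _
      refine ins_last _ x ?_ (by simp)
      have h2 : 2 ≤ (Γ.norm t).length := by rw [hu]; simp
      intro a ha
      exact ih (hu ▸ h2) a (hu ▸ ha)

lemma getD_last_eq {l : List G} (h : l ≠ []) :
    l.getLast? = some (l.getD (l.length - 1) 1) := by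
  have hpos : 0 < l.length := List.length_pos_iff.2 h
  have hlt : l.length - 1 < l.length := by omega
  rw [List.getLast?_eq_getElem?, List.getElem?_eq_getElem hlt,
    List.getD_eq_getElem?_getD, List.getElem?_eq_getElem hlt]
  simp

lemma prel_cons {u v : List G} (x : G) (h : PRel Γ u v) : PRel Γ (x :: u) (x :: v) := by
  rcases h with ⟨p, q, a, b, hab, rfl, rfl⟩ | ⟨p, q, rfl, rfl⟩
  · exact Or.inl ⟨x :: p, q, a, b, hab, by simp, by simp⟩
  · exact Or.inr ⟨x :: p, q, by simp, by simp⟩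

lemma peq_cons (x : G) {u v : List G} (h : Relation.EqvGen (PRel Γ) u v) :
    Relation.EqvGen (PRel Γ) (x :: u) (x :: v) := by
  induction h with
  | rel a b hab => exact Relation.EqvGen.rel _ _ (prel_cons x hab)
  | refl a => exact Relation.EqvGen.refl _
  | symm a b _ ih => exact Relation.EqvGen.symm _ _ ih
  | trans a b c _ _ ih1 ih2 => exact Relation.EqvGen.trans _ _ _ ih1 ih2

lemma peq_ins (u : List G) : ∀ x : G, Relation.EqvGen (PRel Γ) (x :: u) (Γ.ins x u) := by
  induction u with
  | nil => intro x; rw [ins_nil]; exact Relation.EqvGen.refl _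
  | cons u₁ r ih =>
    intro x
    by_cases hm : (Γ.mu u₁ (x⁻¹ * Γ.w₀))⁻¹ * u₁ ∈ Γ.H
    · have h1 : PRel Γ ((x * u₁) :: r) (x :: u₁ :: r) :=
        Or.inl ⟨[], r, x, u₁, D_merge hm, by simp, by simp⟩
      rw [ins_cons_merge hm]
      exact Relation.EqvGen.trans _ _ _
        (Relation.EqvGen.symm _ _ (Relation.EqvGen.rel _ _ h1)) (ih (x * u₁))
    · have hbu : Γ.lesim (Γ.mu u₁ (x⁻¹ * Γ.w₀))
          (Γ.mu u₁ (x⁻¹ * Γ.w₀) * ((Γ.mu u₁ (x⁻¹ * Γ.w₀))⁻¹ * u₁)) := by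
        simpa [mul_inv_cancel_left] using mu_le_left u₁ (x⁻¹ * Γ.w₀)
      have hsplit : PRel Γ (x :: u₁ :: r)
          (x :: Γ.mu u₁ (x⁻¹ * Γ.w₀) :: ((Γ.mu u₁ (x⁻¹ * Γ.w₀))⁻¹ * u₁) :: r) :=
        Or.inl ⟨[x], r, Γ.mu u₁ (x⁻¹ * Γ.w₀), (Γ.mu u₁ (x⁻¹ * Γ.w₀))⁻¹ * u₁, hbu,
          by simp [mul_inv_cancel_left], by simp⟩
      have hxb : Γ.lesim x (x * Γ.mu u₁ (x⁻¹ * Γ.w₀)) := D_iff.2 (mu_le_right _ _)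
      have hmerge : PRel Γ ((x * Γ.mu u₁ (x⁻¹ * Γ.w₀)) :: ((Γ.mu u₁ (x⁻¹ * Γ.w₀))⁻¹ * u₁) :: r)
          (x :: Γ.mu u₁ (x⁻¹ * Γ.w₀) :: ((Γ.mu u₁ (x⁻¹ * Γ.w₀))⁻¹ * u₁) :: r) :=
        Or.inl ⟨[], ((Γ.mu u₁ (x⁻¹ * Γ.w₀))⁻¹ * u₁) :: r, x, Γ.mu u₁ (x⁻¹ * Γ.w₀), hxb,
          by simp, by simp⟩
      rw [ins_cons_split hm]
      refine Relation.EqvGen.trans _ _ _ (Relation.EqvGen.rel _ _ hsplit) ?_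
      refine Relation.EqvGen.trans _ _ _ (Relation.EqvGen.symm _ _ (Relation.EqvGen.rel _ _ hmerge)) ?_
      exact peq_cons _ (ih _)

lemma peq_norm (w : List G) : Relation.EqvGen (PRel Γ) w (Γ.norm w) := by
  induction w with
  | nil => exact Relation.EqvGen.refl _
  | cons x t ih =>
    rw [norm]
    exact Relation.EqvGen.trans _ _ _ (peq_cons x ih) (peq_ins (Γ.norm t) x)

lemma tc_tight_at {p q : List G} {a y : G} (htc : Γ.TC (p ++ [a, y] ++ q)) :
    Γ.TightPair a y := by
  have h2 : List.Chain' Γ.TightPair (p ++ a :: y :: q) := by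
    rw [TC, List.append_assoc] at htc; exact htc
  exact (List.isChain_append_cons_cons.1 h2).2.1

lemma tc_greedy {w : List G} (htc : Γ.TC w) : Greedy Γ w := by
  rintro y ⟨p, q, a, b, c, hab, hbc, rfl, rfl⟩
  have htp : Γ.TightPair a (b * c) := tc_tight_at htc
  have hbH : b ∈ Γ.H := htp b hbc hab
  constructor
  · exact Relation.ReflTransGen.single ⟨p, q, a, b, c, hab, hbc, rfl, rfl⟩
  · refine Relation.ReflTransGen.single ⟨p, q, a * b, b⁻¹, b * c, ?_, ?_, ?_, ?_⟩
    · have := Γ.coset_congr a a b 1 hbH Γ.H.one_mem (Γ.refl a)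
      simpa [mul_assoc] using this
    · have := Hmul_le_Hmul (Γ.H.inv_mem hbH) (Γ.least (b * c))
      simpa using this
    · simp
    · simp

open scoped Classical in
noncomputable def NF (Γ : PseudoGarsideGerm G) (w : List G) : List G :=
  if Γ.norm w = [1] then [] else Γ.norm w

lemma NF_tc (w : List G) : Γ.TC (Γ.NF w) := by
  by_cases h : Γ.norm w = [1]
  · rw [NF, if_pos h]; exact List.isChain_nil
  · rw [NF, if_neg h]; exact norm_tc w

lemma peq_NF (w : List G) : Relation.EqvGen (PRel Γ) w (Γ.NF w) := by
  by_cases h : Γ.norm w = [1]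
  · rw [NF, if_pos h]
    refine Relation.EqvGen.trans _ _ _ (peq_norm w) ?_
    rw [h]
    exact Relation.EqvGen.rel _ _ (Or.inr ⟨[], [], by simp, by simp⟩)
  · rw [NF, if_neg h]; exact peq_norm w

lemma NF_sg (w : List G) : StronglyGreedy Γ (Γ.NF w) := by
  refine ⟨tc_greedy (NF_tc w), ?_, ?_⟩
  · by_cases h : Γ.norm w = [1]
    · rw [NF, if_pos h]; intro hlen; simp at hlen
    · rw [NF, if_neg h]
      intro hlen
      have hne : Γ.norm w ≠ [] := by
        intro hnil; rw [hnil] at hlen; simp at hlen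
      have := norm_lastH w hlen
      have hlast := getD_last_eq hne
      exact this _ (by rw [hlast]; simp)
  · by_cases h : Γ.norm w = [1]
    · rw [NF, if_pos h]; intro hlen; simp at hlen
    · rw [NF, if_neg h]
      intro _ heq
      exact h heq

end PseudoGarsideGerm

namespace PseudoGarsideGerm

variable {G : Type*} [Group G] {Γ : PseudoGarsideGerm G}

def fst (l : List G) : G := l.getD 0 1

lemma rw_fst {u v : List G} (h : GermRw Γ u v) : Γ.lesim (fst u) (fst v) := by
  obtain ⟨p, q, a, b, c, hab, hbc, rfl, rfl⟩ := h
  cases p with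
  | nil => simpa [fst] using hab
  | cons p₀ p' => simp [fst]; exact Γ.refl p₀

lemma le_fst {u v : List G} (h : GermLe Γ u v) : Γ.lesim (fst u) (fst v) := by
  induction h with
  | refl => exact Γ.refl _
  | tail _ hstep ih => exact lesim_trans ih (rw_fst hstep)

def tau (a : G) (w : List G) : List G := (a⁻¹ * w.getD 0 1 * w.getD 1 1) :: w.drop 2

lemma tau_cons (a : G) {y : List G} (hy : y ≠ []) : tau a (a :: y) = y := by
  cases y with
  | nil => exact absurd rfl hy
  | cons y₀ ys => simp [tau]

lemma germLe_tau {y : List G} : ∀ {x : List G}, GermLe Γ x y →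
    ∀ a h, h ∈ Γ.H → fst x = a * h → Γ.lesim (fst y) a →
    GermLe Γ (tau a x) (tau a y) := by
  intro x hxy
  induction hxy using Relation.ReflTransGen.head_induction_on with
  | refl => intro a h hh hfx hfy; exact Relation.ReflTransGen.refl
  | head hstep hrest ih =>
    intro a h hh hfx hfy
    rename_i x z
    have h1 : Γ.lesim a (fst x) := by rw [hfx]; exact le_mulH hh (Γ.refl a)
    have h2 := rw_fst hstep
    have h3 := le_fst hrest
    have h4 : Γ.lesim (fst z) a := lesim_trans h3 hfy
    have h5 : Γ.lesim a (fst z) := lesim_trans h1 h2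
    have h6 : a⁻¹ * fst z ∈ Γ.H := Γ.antisymm _ _ h5 h4
    have hfz : fst z = a * (a⁻¹ * fst z) := by group
    have ihz := ih a _ h6 hfz hfy
    refine Relation.ReflTransGen.trans ?_ ihz
    obtain ⟨p, q, A, B, C, hAB, hBC, hx, hz⟩ := hstep
    subst hx; subst hz
    match p with
    | [] =>
      have he : tau a ([] ++ [A, B * C] ++ q) = tau a ([] ++ [A * B, C] ++ q) := by
        simp [tau, mul_assoc]
      rw [he]
    | [p₀] =>
      have hp₀ : p₀ = a * h := by simpa [fst] using hfx
      apply Relation.ReflTransGen.single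
      refine ⟨[], q, a⁻¹ * p₀ * A, B, C, ?_, hBC, ?_, ?_⟩
      · have e : a⁻¹ * p₀ * A = h * A := by rw [hp₀]; group
        rw [e]
        have h7 := Hmul_le_Hmul hh hAB
        rwa [← mul_assoc] at h7
      · simp [tau]
      · simp [tau, mul_assoc]
    | p₀ :: p₁ :: p' =>
      apply Relation.ReflTransGen.single
      refine ⟨(a⁻¹ * p₀ * p₁) :: p', q, A, B, C, hAB, hBC, ?_, ?_⟩
      · simp [tau]
      · simp [tau]

lemma greedy_tail {a : G} {t : List G} (h : Greedy Γ (a :: t)) : Greedy Γ t := by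
  rintro y hy
  obtain ⟨p, q, A, B, C, hAB, hBC, ht, hyeq⟩ := hy
  have hrw : GermRw Γ (a :: t) (a :: y) :=
    ⟨a :: p, q, A, B, C, hAB, hBC, by rw [ht]; simp, by rw [hyeq]; simp⟩
  obtain ⟨hfwd, hback⟩ := h _ hrw
  have htau := germLe_tau hback a 1 Γ.H.one_mem (by simp [fst]) (by simp [fst]; exact Γ.refl a)
  have hyne : y ≠ [] := by rw [hyeq]; simp
  have htne : t ≠ [] := by rw [ht]; simp
  rw [tau_cons a hyne, tau_cons a htne] at htau
  exact ⟨Relation.ReflTransGen.single ⟨p, q, A, B, C, hAB, hBC, ht, hyeq⟩, htau⟩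

lemma greedy_tc : ∀ {w : List G}, Greedy Γ w → Γ.TC w := by
  intro w
  induction w with
  | nil => intro _; exact List.isChain_nil
  | cons a t ih =>
    intro hg
    cases t with
    | nil => exact List.isChain_singleton a
    | cons t₁ t' =>
      refine List.isChain_cons_cons.2 ⟨?_, ih (greedy_tail hg)⟩
      intro e he hDe
      have hrw : GermRw Γ (a :: t₁ :: t') ((a * e) :: (e⁻¹ * t₁) :: t') :=
        ⟨[], t', a, e, e⁻¹ * t₁, hDe, by simpa [mul_inv_cancel_left] using he,
          by simp [mul_inv_cancel_left], rfl⟩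
      obtain ⟨_, hback⟩ := hg _ hrw
      have h1 := le_fst hback
      have := Γ.antisymm a (a * e) hDe (by simpa [fst] using h1)
      simpa using this

end PseudoGarsideGerm

namespace PseudoGarsideGerm

variable {G : Type*} [Group G] {Γ : PseudoGarsideGerm G}

/-- Same length, same total product, and all prefix products agree mod `H`. -/
def PreEq (Γ : PseudoGarsideGerm G) (x y : List G) : Prop :=
  x.length = y.length ∧ x.prod = y.prod ∧
    ∀ i, ((y.take i).prod)⁻¹ * (x.take i).prod ∈ Γ.H

lemma preEq_refl {x : List G} : Γ.PreEq x x :=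
  ⟨rfl, rfl, fun i => by simpa using Γ.H.one_mem⟩

lemma preEq_symm {x y : List G} (h : Γ.PreEq x y) : Γ.PreEq y x := by
  obtain ⟨h1, h2, h3⟩ := h
  refine ⟨h1.symm, h2.symm, fun i => ?_⟩
  have := Γ.H.inv_mem (h3 i)
  simpa using this

lemma preEq_trans {x y z : List G} (h : Γ.PreEq x y) (h' : Γ.PreEq y z) : Γ.PreEq x z := by
  obtain ⟨h1, h2, h3⟩ := h
  obtain ⟨h1', h2', h3'⟩ := h'
  refine ⟨h1.trans h1', h2.trans h2', fun i => ?_⟩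
  have := Γ.H.mul_mem (h3' i) (h3 i)
  simpa [mul_assoc] using this

lemma preEq_twist {b : G} (hb : b ∈ Γ.H) (p q : List G) (a c : G) :
    Γ.PreEq (p ++ [a, b * c] ++ q) (p ++ [a * b, c] ++ q) := by
  induction p with
  | nil =>
    refine ⟨by simp, by simp [mul_assoc], fun i => ?_⟩
    match i with
    | 0 => simpa using Γ.H.one_mem
    | 1 =>
      simp only [List.nil_append, List.cons_append, List.take_succ_cons, List.take_zero,
        List.prod_cons, List.prod_nil]
      have e : (a * b * 1)⁻¹ * (a * 1) = b⁻¹ := by group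
      rw [e]; exact Γ.H.inv_mem hb
    | (n + 2) =>
      simp only [List.nil_append, List.cons_append, List.take_succ_cons, List.prod_cons]
      have e : (a * b * (c * (List.take n q).prod))⁻¹ * (a * (b * c * (List.take n q).prod)) = 1 := by
        group
      rw [e]; exact Γ.H.one_mem
  | cons z p' ih =>
    obtain ⟨h1, h2, h3⟩ := ih
    refine ⟨by simpa using h1, ?_, fun i => ?_⟩
    · simp only [List.cons_append, List.prod_cons]
      rw [h2]
    · match i with
      | 0 => simpa using Γ.H.one_mem
      | (n + 1) =>
        simp only [List.cons_append, List.take_succ_cons, List.prod_cons]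
        have e : ∀ Y X : G, (z * Y)⁻¹ * (z * X) = Y⁻¹ * X := by intro Y X; group
        rw [e]
        exact h3 n

lemma tc_rw_step {V z : List G} (htc : Γ.TC V) (h : GermRw Γ V z) :
    Γ.PreEq V z ∧ Γ.TC z := by
  obtain ⟨p, q, a, b, c, hab, hbc, rfl, rfl⟩ := h
  have htp : Γ.TightPair a (b * c) := tc_tight_at htc
  have hbH : b ∈ Γ.H := htp b hbc hab
  refine ⟨preEq_twist hbH p q a c, ?_⟩
  have h2 : List.Chain' Γ.TightPair (p ++ a :: (b * c) :: q) := by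
    rw [TC, List.append_assoc] at htc; exact htc
  obtain ⟨hc1, _, hc3⟩ := List.isChain_append_cons_cons.1 h2
  show Γ.TC (p ++ [a * b, c] ++ q)
  rw [TC, List.append_assoc]
  show List.Chain' Γ.TightPair (p ++ (a * b) :: c :: q)
  refine List.isChain_append_cons_cons.2 ⟨?_, ?_, ?_⟩
  · refine List.isChain_append.2 ⟨(List.isChain_append.1 hc1).1, List.isChain_singleton _, ?_⟩
    intro x hx y hy
    simp at hy; subst hy
    have hxa : Γ.TightPair x a := (List.isChain_append.1 hc1).2.2 x hx a (by simp)
    intro e he hDe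
    exact hxa e (le_of_le_mulH hbH he) hDe
  · intro e he hDe
    have hD2 : Γ.D a (b * e) := by
      show Γ.lesim a (a * (b * e))
      have h4 : Γ.lesim a (a * b * e) := lesim_trans hab hDe
      rwa [mul_assoc] at h4
    have hle : Γ.lesim (b * e) (b * c) := (D_le_mul he (show Γ.D b c from hbc)).2
    have hbe : (b * e) ∈ Γ.H := htp _ hle hD2
    have he' : e = b⁻¹ * (b * e) := by group
    rw [he']; exact Γ.H.mul_mem (Γ.H.inv_mem hbH) hbe
  · cases q with
    | nil => exact List.isChain_singleton c
    | cons q₀ q' =>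
      refine List.isChain_cons_cons.2 ⟨?_, (List.isChain_cons_cons.1 hc3).2⟩
      intro e he hDe
      have hbce : Γ.D (b * c) e := by
        show Γ.lesim (b * c) (b * c * e)
        have h5 := Hmul_le_Hmul hbH hDe
        rwa [← mul_assoc] at h5
      exact (List.isChain_cons_cons.1 hc3).1 e he hbce

lemma tc_le_preEq {V z : List G} (htc : Γ.TC V) (h : GermLe Γ V z) :
    Γ.PreEq V z ∧ Γ.TC z := by
  induction h with
  | refl => exact ⟨preEq_refl, htc⟩
  | tail _ hstep ih =>
    obtain ⟨hp, htc'⟩ := ih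
    obtain ⟨hp2, htc2⟩ := tc_rw_step htc' hstep
    exact ⟨preEq_trans hp hp2, htc2⟩

end PseudoGarsideGerm

namespace PseudoGarsideGerm

variable {G : Type*} [Group G] {Γ : PseudoGarsideGerm G}

lemma germRw_cons {u v : List G} (x : G) (h : GermRw Γ u v) : GermRw Γ (x :: u) (x :: v) := by
  obtain ⟨p, q, a, b, c, h1, h2, rfl, rfl⟩ := h
  exact ⟨x :: p, q, a, b, c, h1, h2, by simp, by simp⟩

lemma diamond_nil {q : List G} {a b c : G} (hab : Γ.lesim a (a * b)) (hbc : Γ.lesim b (b * c)) :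
    ∀ (p' : List G) {q' : List G} {a' b' c' : G}, Γ.lesim a' (a' * b') → Γ.lesim b' (b' * c') →
    ([a, b * c] ++ q : List G) = p' ++ [a', b' * c'] ++ q' →
    ∃ d, GermRw Γ ([a * b, c] ++ q) d ∧ GermRw Γ (p' ++ [a' * b', c'] ++ q') d := by
  intro p' q' a' b' c' h1 h2 heq
  match p' with
  | [] =>
    simp only [List.nil_append, List.cons_append] at heq
    obtain ⟨rfl, heq2⟩ := List.cons_eq_cons.1 heq
    obtain ⟨hy, rfl⟩ := List.cons_eq_cons.1 heq2
    have hDas : Γ.D a (Γ.jn b b') := D_iff.2 (jn_le (D_iff.1 hab) (D_iff.1 h1))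
    have hsy : Γ.lesim (Γ.jn b b') (b * c) := jn_le hbc (hy ▸ h2)
    refine ⟨[a * Γ.jn b b', (Γ.jn b b')⁻¹ * (b * c)] ++ q, ?_, ?_⟩
    · refine ⟨[], q, a * b, b⁻¹ * Γ.jn b b', (Γ.jn b b')⁻¹ * (b * c), ?_, ?_, ?_, ?_⟩
      · have h3 := (D_le_mul (left_le_jn b b') hDas).2
        have e : a * b * (b⁻¹ * Γ.jn b b') = a * Γ.jn b b' := by group
        rw [e]; exact h3
      · have hDb : Γ.D b (b⁻¹ * Γ.jn b b') := by
          show Γ.lesim b (b * (b⁻¹ * Γ.jn b b'))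
          simpa [mul_inv_cancel_left] using left_le_jn b b'
        have h4 := le_of_mul_le hDb
          (show Γ.lesim (b * (b⁻¹ * Γ.jn b b')) (b * (b⁻¹ * (b * c))) by
            simpa [mul_inv_cancel_left] using hsy)
        have e : b⁻¹ * Γ.jn b b' * ((Γ.jn b b')⁻¹ * (b * c)) = b⁻¹ * (b * c) := by group
        rw [e]; exact h4
      · have e : b⁻¹ * Γ.jn b b' * ((Γ.jn b b')⁻¹ * (b * c)) = c := by group
        rw [e]; all_goals simp
      · have e : a * b * (b⁻¹ * Γ.jn b b') = a * Γ.jn b b' := by group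
        rw [e]; all_goals simp
    · refine ⟨[], q, a * b', b'⁻¹ * Γ.jn b b', (Γ.jn b b')⁻¹ * (b * c), ?_, ?_, ?_, ?_⟩
      · have h3 := (D_le_mul (right_le_jn b b') hDas).2
        have e : a * b' * (b'⁻¹ * Γ.jn b b') = a * Γ.jn b b' := by group
        rw [e]; exact h3
      · have hDb' : Γ.D b' (b'⁻¹ * Γ.jn b b') := by
          show Γ.lesim b' (b' * (b'⁻¹ * Γ.jn b b'))
          simpa [mul_inv_cancel_left] using right_le_jn b b'
        have h4 := le_of_mul_le hDb'
          (show Γ.lesim (b' * (b'⁻¹ * Γ.jn b b')) (b' * (b'⁻¹ * (b * c))) by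
            simpa [mul_inv_cancel_left] using hsy)
        have e : b'⁻¹ * Γ.jn b b' * ((Γ.jn b b')⁻¹ * (b * c)) = b'⁻¹ * (b * c) := by group
        rw [e]; exact h4
      · have e : b'⁻¹ * Γ.jn b b' * ((Γ.jn b b')⁻¹ * (b * c)) = c' := by rw [hy]; group
        rw [e]; all_goals simp
      · have e : a * b' * (b'⁻¹ * Γ.jn b b') = a * Γ.jn b b' := by group
        rw [e]; all_goals simp
  | [z] =>
    simp only [List.cons_append, List.nil_append] at heq
    obtain ⟨rfl, heq2⟩ := List.cons_eq_cons.1 heq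
    obtain ⟨ha', heq3⟩ := List.cons_eq_cons.1 heq2
    subst heq3
    subst ha'
    have hp := (Γ.pg2 b c b').1 ⟨hbc, h1⟩
    refine ⟨[a * b, c * b', c'] ++ q', ?_, ?_⟩
    · exact ⟨[a * b], q', c, b', c', hp.1, h2, by simp, by simp⟩
    · refine ⟨[], c' :: q', a, b, c * b', hab, ?_, ?_, ?_⟩
      · have h5 := hp.2
        rwa [mul_assoc] at h5
      · have e : b * (c * b') = b * c * b' := by group
        rw [e]; all_goals simp
      · simp
  | z :: z' :: p'' =>
    simp only [List.cons_append, List.nil_append] at heq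
    obtain ⟨rfl, heq2⟩ := List.cons_eq_cons.1 heq
    obtain ⟨hz', heq3⟩ := List.cons_eq_cons.1 heq2
    subst heq3
    subst hz'
    refine ⟨[a * b, c] ++ p'' ++ [a' * b', c'] ++ q', ?_, ?_⟩
    · exact ⟨[a * b, c] ++ p'', q', a', b', c', h1, h2, by simp, by simp⟩
    · exact ⟨[], p'' ++ [a' * b', c'] ++ q', a, b, c, hab, hbc, by simp, by simp⟩

lemma diamond : ∀ (p : List G) {q : List G} {a b c : G}, Γ.lesim a (a * b) → Γ.lesim b (b * c) →
    ∀ (p' : List G) {q' : List G} {a' b' c' : G}, Γ.lesim a' (a' * b') → Γ.lesim b' (b' * c') →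
    p ++ [a, b * c] ++ q = p' ++ [a', b' * c'] ++ q' →
    ∃ d, GermRw Γ (p ++ [a * b, c] ++ q) d ∧ GermRw Γ (p' ++ [a' * b', c'] ++ q') d := by
  intro p
  induction p with
  | nil =>
    intro q a b c hab hbc p' q' a' b' c' h1 h2 heq
    exact diamond_nil hab hbc p' h1 h2 heq
  | cons z pt ih =>
    intro q a b c hab hbc p' q' a' b' c' h1 h2 heq
    cases p' with
    | nil =>
      obtain ⟨d, hd1, hd2⟩ := diamond_nil h1 h2 (z :: pt) hab hbc heq.symm
      exact ⟨d, hd2, hd1⟩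
    | cons w pt' =>
      simp only [List.cons_append] at heq
      obtain ⟨rfl, heq2⟩ := List.cons_eq_cons.1 heq
      obtain ⟨d, hd1, hd2⟩ := ih hab hbc pt' h1 h2 heq2
      refine ⟨z :: d, ?_, ?_⟩
      · have := germRw_cons z hd1
        simpa using this
      · have := germRw_cons z hd2
        simpa using this

lemma diamond' {u v₁ v₂ : List G} (h1 : GermRw Γ u v₁) (h2 : GermRw Γ u v₂) :
    ∃ d, GermRw Γ v₁ d ∧ GermRw Γ v₂ d := by
  obtain ⟨p, q, a, b, c, hab, hbc, rfl, rfl⟩ := h1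
  obtain ⟨p', q', a', b', c', h1', h2', heq, rfl⟩ := h2
  exact diamond p hab hbc p' h1' h2' heq

lemma joinable_of_eqvGen {u v : List G} (h : Relation.EqvGen (GermRw Γ) u v) :
    Relation.Join (GermLe Γ) u v := by
  have hcr : ∀ a b c : List G, GermRw Γ a b → GermRw Γ a c →
      ∃ d, Relation.ReflGen (GermRw Γ) b d ∧ Relation.ReflTransGen (GermRw Γ) c d := by
    intro a b c hb hc
    obtain ⟨d, hd1, hd2⟩ := diamond' hb hc
    exact ⟨d, Relation.ReflGen.single hd1, Relation.ReflTransGen.single hd2⟩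
  have hequiv := Relation.equivalence_join_reflTransGen hcr
  have hmono := Relation.EqvGen.mono
    (fun a b (hab : GermRw Γ a b) =>
      (⟨b, Relation.ReflTransGen.single hab, Relation.ReflTransGen.refl⟩ :
        Relation.Join (Relation.ReflTransGen (GermRw Γ)) a b)) _ _ h
  exact hequiv.eqvGen_iff.1 hmono

end PseudoGarsideGerm

namespace PseudoGarsideGerm

variable {G : Type*} [Group G] {Γ : PseudoGarsideGerm G}

lemma tightPair_one (z : G) : Γ.TightPair z 1 :=
  fun _ he _ => mem_H_of_le_one he

lemma tc_ones (n : ℕ) : Γ.TC (List.replicate n (1 : G)) := by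
  induction n with
  | zero => exact List.isChain_nil
  | succ n ih =>
    rw [List.replicate_succ]
    refine List.IsChain.cons ih ?_
    intro y hy
    have hy1 : y = 1 := by
      cases n with
      | zero => simp at hy
      | succ m => rw [List.replicate_succ] at hy; simp at hy; exact hy.symm
    subst hy1; exact tightPair_one 1

lemma tc_append_ones {x : List G} (htc : Γ.TC x) (n : ℕ) :
    Γ.TC (x ++ List.replicate n (1 : G)) := by
  refine List.IsChain.append htc (tc_ones n) ?_
  intro a _ y hy
  have hy1 : y = 1 := by
    cases n with
    | zero => simp at hy
    | succ m => rw [List.replicate_succ] at hy; simp at hy; exact hy.symm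
  subst hy1; exact tightPair_one a

lemma float_one : ∀ (q p : List G), GermLe Γ (p ++ 1 :: q) (p ++ q ++ [1]) := by
  intro q
  induction q with
  | nil =>
    intro p
    simp only [List.append_nil]
    exact Relation.ReflTransGen.refl
  | cons z q' ih =>
    intro p
    have hstep : GermRw Γ (p ++ 1 :: z :: q') (p ++ z :: 1 :: q') :=
      ⟨p, q', 1, z, 1, by simpa using Γ.least z, by simpa using Γ.refl z, by simp, by simp⟩
    refine Relation.ReflTransGen.head hstep ?_
    have h2 := ih (p ++ [z])
    simpa [List.append_assoc, GermLe] using h2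

lemma germLe_eqvGen {u v : List G} (h : GermLe Γ u v) : Relation.EqvGen (GermRw Γ) u v := by
  induction h with
  | refl => exact Relation.EqvGen.refl _
  | tail _ hstep ih => exact Relation.EqvGen.trans _ _ _ ih (Relation.EqvGen.rel _ _ hstep)

lemma germRw_append_right {u v : List G} (s : List G) (h : GermRw Γ u v) :
    GermRw Γ (u ++ s) (v ++ s) := by
  obtain ⟨p, q, a, b, c, h1, h2, rfl, rfl⟩ := h
  exact ⟨p, q ++ s, a, b, c, h1, h2, by simp, by simp⟩

lemma eqvGen_append_right {u v : List G} (s : List G)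
    (h : Relation.EqvGen (GermRw Γ) u v) :
    Relation.EqvGen (GermRw Γ) (u ++ s) (v ++ s) := by
  induction h with
  | rel a b hab => exact Relation.EqvGen.rel _ _ (germRw_append_right s hab)
  | refl a => exact Relation.EqvGen.refl _
  | symm a b _ ih => exact Relation.EqvGen.symm _ _ ih
  | trans a b c _ _ ih1 ih2 => exact Relation.EqvGen.trans _ _ _ ih1 ih2

/-- Equivalence of words after padding with trivial letters. -/
def Etil (Γ : PseudoGarsideGerm G) (u v : List G) : Prop :=
  ∃ m n, Relation.EqvGen (GermRw Γ) (u ++ List.replicate m 1) (v ++ List.replicate n 1)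

lemma etil_refl (u : List G) : Γ.Etil u u := ⟨0, 0, Relation.EqvGen.refl _⟩

lemma etil_symm {u v : List G} (h : Γ.Etil u v) : Γ.Etil v u := by
  obtain ⟨m, n, hE⟩ := h
  exact ⟨n, m, Relation.EqvGen.symm _ _ hE⟩

lemma etil_trans {u v w : List G} (h1 : Γ.Etil u v) (h2 : Γ.Etil v w) : Γ.Etil u w := by
  obtain ⟨m, n, hE1⟩ := h1
  obtain ⟨n', k, hE2⟩ := h2
  have hE1' := eqvGen_append_right (List.replicate n' (1 : G)) hE1
  have hE2' := eqvGen_append_right (List.replicate n (1 : G)) hE2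
  rw [List.append_assoc, List.append_assoc, ← List.replicate_add, ← List.replicate_add] at hE1' hE2'
  rw [Nat.add_comm n' n] at hE2'
  exact ⟨m + n', k + n, Relation.EqvGen.trans _ _ _ hE1' hE2'⟩

lemma prel_etil {u v : List G} (h : PRel Γ u v) : Γ.Etil u v := by
  rcases h with ⟨p, q, a, b, hab, rfl, rfl⟩ | ⟨p, q, rfl, rfl⟩
  · refine ⟨1, 0, ?_⟩
    have hstep : GermRw Γ (p ++ [a, b] ++ q) (p ++ [a * b, 1] ++ q) :=
      ⟨p, q, a, b, 1, hab, by simpa using Γ.refl b, by simp, by simp⟩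
    have hfloat : GermLe Γ ((p ++ [a * b]) ++ 1 :: q) ((p ++ [a * b]) ++ q ++ [1]) :=
      float_one q (p ++ [a * b])
    have hle : GermLe Γ (p ++ [a, b] ++ q) ((p ++ [a * b] ++ q) ++ [1]) := by
      refine Relation.ReflTransGen.head hstep ?_
      have e1 : p ++ [a * b, 1] ++ q = (p ++ [a * b]) ++ 1 :: q := by simp
      have e2 : (p ++ [a * b]) ++ q ++ [1] = (p ++ [a * b] ++ q) ++ [1] := by simp
      rw [e1, ← e2]
      exact hfloat
    have := Relation.EqvGen.symm _ _ (germLe_eqvGen hle)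
    simpa using this
  · refine ⟨0, 1, ?_⟩
    have hle : GermLe Γ (p ++ 1 :: q) (p ++ q ++ [1]) := float_one q p
    have := germLe_eqvGen hle
    simpa using this

lemma etil_of_peq {u v : List G} (h : Relation.EqvGen (PRel Γ) u v) : Γ.Etil u v := by
  induction h with
  | rel a b hab => exact prel_etil hab
  | refl a => exact etil_refl a
  | symm a b _ ih => exact etil_symm ih
  | trans a b c _ _ ih1 ih2 => exact etil_trans ih1 ih2

end PseudoGarsideGerm

namespace PseudoGarsideGerm

variable {G : Type*} [Group G] {Γ : PseudoGarsideGerm G}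

lemma strEq_of_preEq {x y : List G} (h : Γ.PreEq x y) : StrEq Γ x y := by
  obtain ⟨hlen, hprod, hH⟩ := h
  refine ⟨hlen, fun i => ((y.take i).prod)⁻¹ * (x.take i).prod, by simp, ?_, hH, ?_⟩
  · beta_reduce
    have e1 : ∀ I, y.length ≤ I → x.length ≤ I →
        ((y.take I).prod)⁻¹ * (x.take I).prod = 1 := by
      intro I h1 h2
      rw [List.take_of_length_le h1, List.take_of_length_le h2, hprod]; simp
    exact e1 _ (by omega) (by omega)
  · intro i hi
    have hi' : i < y.length := hlen ▸ hi
    have hx := List.prod_take_succ x i hi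
    have hy := List.prod_take_succ y i hi'
    have hgx : x.getD i 1 = x[i] := by
      rw [List.getD_eq_getElem?_getD, List.getElem?_eq_getElem hi]; rfl
    have hgy : y.getD i 1 = y[i] := by
      rw [List.getD_eq_getElem?_getD, List.getElem?_eq_getElem hi']; rfl
    have ex : x[i] = ((x.take i).prod)⁻¹ * (x.take (i + 1)).prod := by rw [hx]; group
    have ey : y[i] = ((y.take i).prod)⁻¹ * (y.take (i + 1)).prod := by rw [hy]; group
    rw [hgx, hgy, ex, ey]; group

lemma take_pad_le {x s : List G} {i : ℕ} (h : i ≤ x.length) :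
    (x ++ s).take i = x.take i := by
  rw [List.take_append]
  have e : i - x.length = 0 := by omega
  rw [e]; simp

lemma take_pad_prod_ge {x : List G} {m i : ℕ} (h : x.length ≤ i) :
    ((x ++ List.replicate m (1 : G)).take i).prod = x.prod := by
  rw [List.take_append, List.take_of_length_le h, List.take_replicate]
  simp

lemma not_len_lt {x y : List G} (hy : StronglyGreedy Γ y)
    {m n : ℕ} (h : Γ.PreEq (x ++ List.replicate m 1) (y ++ List.replicate n 1))
    (hlt : x.length < y.length) : False := by
  obtain ⟨_, hprod, hH⟩ := h
  have hpx : x.prod = y.prod := by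
    have h1 : (x ++ List.replicate m (1 : G)).prod = x.prod := by simp
    have h2 : (y ++ List.replicate n (1 : G)).prod = y.prod := by simp
    rw [h1, h2] at hprod; exact hprod
  have key : ∀ j, x.length ≤ j → j ≤ y.length → ((y.take j).prod)⁻¹ * x.prod ∈ Γ.H := by
    intro j h1 h2
    have h3 := hH j
    rw [take_pad_prod_ge h1, take_pad_le h2] at h3
    exact h3
  have hy1 : 1 ≤ y.length := by omega
  by_cases h2 : 2 ≤ y.length
  · -- the last letter of y lies in H, contradiction
    have hjlt : y.length - 1 < y.length := by omega
    have hA1 := key (y.length - 1) (by omega) (by omega)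
    have hA2 := key y.length (by omega) (le_refl _)
    have hsucc : y.length - 1 + 1 = y.length := by omega
    have hps := List.prod_take_succ y (y.length - 1) hjlt
    rw [hsucc, List.take_length] at hps
    -- hps : y.prod = (y.take (y.length - 1)).prod * y[y.length-1]
    rw [List.take_length] at hA2
    have hmem : y[y.length - 1] ∈ Γ.H := by
      have hcomb := Γ.H.mul_mem hA1 (Γ.H.inv_mem hA2)
      have e : ((y.take (y.length - 1)).prod)⁻¹ * x.prod * (y.prod⁻¹ * x.prod)⁻¹
          = ((y.take (y.length - 1)).prod)⁻¹ * y.prod := by group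
      rw [e, hps] at hcomb
      have e2 : ((y.take (y.length - 1)).prod)⁻¹ * ((y.take (y.length - 1)).prod * y[y.length - 1])
          = y[y.length - 1] := by group
      rwa [e2] at hcomb
    have hg := hy.2.1 h2
    have hgd : y.getD (y.length - 1) 1 = y[y.length - 1] := by
      rw [List.getD_eq_getElem?_getD, List.getElem?_eq_getElem hjlt]; rfl
    rw [hgd] at hg
    exact hg hmem
  · -- y has length 1, x is empty, so y = [1]
    have hylen : y.length = 1 := by omega
    have hxlen : x.length = 0 := by omega
    have hxnil : x = [] := List.length_eq_zero_iff.1 hxlen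
    obtain ⟨g, hg⟩ := List.length_eq_one_iff.1 hylen
    have : g = 1 := by
      have := hpx
      rw [hxnil, hg] at this
      simpa using this.symm
    exact hy.2.2 hylen (by rw [hg, this])

lemma len_eq_of_padded {x y : List G} (hx : StronglyGreedy Γ x) (hy : StronglyGreedy Γ y)
    {m n : ℕ} (h : Γ.PreEq (x ++ List.replicate m 1) (y ++ List.replicate n 1)) :
    x.length = y.length := by
  rcases Nat.lt_trichotomy x.length y.length with hlt | heq | hgt
  · exact absurd hlt (fun hlt => not_len_lt hy h hlt)
  · exact heq
  · exact absurd hgt (fun hgt => not_len_lt hx (preEq_symm h) hgt)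

lemma preEq_unpad {x y : List G} (hlen : x.length = y.length)
    {m n : ℕ} (h : Γ.PreEq (x ++ List.replicate m 1) (y ++ List.replicate n 1)) :
    Γ.PreEq x y := by
  obtain ⟨_, hprod, hH⟩ := h
  refine ⟨hlen, ?_, ?_⟩
  · have h1 : (x ++ List.replicate m (1 : G)).prod = x.prod := by simp
    have h2 : (y ++ List.replicate n (1 : G)).prod = y.prod := by simp
    rw [h1, h2] at hprod; exact hprod
  · intro i
    by_cases hi : i ≤ x.length
    · have h3 := hH i
      rwa [take_pad_le hi, take_pad_le (hlen ▸ hi)] at h3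
    · have h3 := hH i
      rw [take_pad_prod_ge (x := x) (by omega), take_pad_prod_ge (x := y) (by omega)] at h3
      rw [List.take_of_length_le (l := x) (by omega), List.take_of_length_le (l := y) (by omega)]
      exact h3

end PseudoGarsideGerm

open PseudoGarsideGerm in
/-- Every element of `B⁺` can be written `r(x₁)⋯r(xₙ)` with `(x₁,…,xₙ)`
strongly greedy, uniquely up to strong equivalence. -/
theorem stmt15 {G : Type*} [Group G] (Γ : PseudoGarsideGerm G) :
    (∀ w : List G, ∃ x, Relation.EqvGen (PRel Γ) w x ∧ StronglyGreedy Γ x) ∧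
    (∀ x y : List G, StronglyGreedy Γ x → StronglyGreedy Γ y →
      Relation.EqvGen (PRel Γ) x y → StrEq Γ x y) := by
  constructor
  · intro w
    exact ⟨Γ.NF w, peq_NF w, NF_sg w⟩
  · intro x y hx hy hpeq
    obtain ⟨m, n, hE⟩ := etil_of_peq hpeq
    obtain ⟨d, hd1, hd2⟩ := joinable_of_eqvGen hE
    have htcx : Γ.TC (x ++ List.replicate m 1) := tc_append_ones (greedy_tc hx.1) m
    have htcy : Γ.TC (y ++ List.replicate n 1) := tc_append_ones (greedy_tc hy.1) n
    have h1 := (tc_le_preEq htcx hd1).1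
    have h2 := (tc_le_preEq htcy hd2).1
    have hpre : Γ.PreEq (x ++ List.replicate m 1) (y ++ List.replicate n 1) :=
      preEq_trans h1 (preEq_symm h2)
    have hlen := len_eq_of_padded hx hy hpre
    exact strEq_of_preEq (preEq_unpad hlen hpre)
end

section
/- In the free monoid T* on T = {1,…,n−1} with the rewriting relation generated by ∅ → (i), (i,i) → (i), (i,j) → (j,i) for |i−j| > 1, and (i, i+1, i) → (i+1, i, i+1), the relation (k,…,1)(k,…,1) → (k,…,1)(k,…,2) holds for all 0 < k < n, and consequently every element of T* can be rewritten to D₁ = (n−1,…,1)(n−1,…,2)⋯(n−1,n−2)(n−1). -/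
/-- The decreasing word `(k, k-1, …, m)`. -/
def descWord (k m : ℕ) : List ℕ := (List.range' m (k + 1 - m)).reverse

/-- One rewriting step (applied at any position) in the free monoid `T*` on
`T = {1,…,n-1}`: `∅ → (i)`, `(i,i) → (i)`, `(i,j) → (j,i)` for `|i-j| > 1`,
and `(i, i+1, i) → (i+1, i, i+1)`. -/
inductive TRw (n : ℕ) : List ℕ → List ℕ → Prop
  | empty (i : ℕ) (h1 : 1 ≤ i) (h2 : i < n) : TRw n [] [i]
  | dup (i : ℕ) (h1 : 1 ≤ i) (h2 : i < n) : TRw n [i, i] [i]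
  | comm (i j : ℕ) (h1 : 1 ≤ i) (h2 : i < n) (h3 : 1 ≤ j) (h4 : j < n)
      (h : 1 < max (i - j) (j - i)) : TRw n [i, j] [j, i]
  | braid (i : ℕ) (h1 : 1 ≤ i) (h2 : i + 1 < n) :
      TRw n [i, i + 1, i] [i + 1, i, i + 1]
  | congr (a b x y : List ℕ) (h : TRw n x y) : TRw n (a ++ x ++ b) (a ++ y ++ b)

/-- The word `D₁ = (n-1,…,1)(n-1,…,2)⋯(n-1)`. -/
def Dword (n : ℕ) : List ℕ :=
  ((List.range' 1 (n - 1)).map (fun m => descWord (n - 1) m)).flatten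

open Relation

lemma rtg_congr {n : ℕ} (a b : List ℕ) {x y : List ℕ}
    (h : ReflTransGen (TRw n) x y) :
    ReflTransGen (TRw n) (a ++ x ++ b) (a ++ y ++ b) := by
  induction h with
  | refl => exact .refl
  | tail _ h ih => exact ih.tail (.congr a b _ _ h)

lemma descWord_cons {k m : ℕ} (hk : 1 ≤ k) (h : m ≤ k) :
    descWord k m = k :: descWord (k - 1) m := by
  unfold descWord
  have h1 : k + 1 - m = (k - m) + 1 := by omega
  have h2 : k - 1 + 1 - m = k - m := by omega
  have h3 : m + 1 * (k - m) = k := by omega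
  rw [h1, List.range'_concat, h3, List.reverse_append, h2]
  rfl

lemma descWord_concat {k m : ℕ} (h : m ≤ k) :
    descWord k m = descWord k (m + 1) ++ [m] := by
  unfold descWord
  have h1 : k + 1 - m = (k - m) + 1 := by omega
  have h2 : k + 1 - (m + 1) = k - m := by omega
  rw [h1, h2, List.range'_succ, List.reverse_cons]

lemma descWord_split {k m j : ℕ} (h1 : m ≤ j) (h2 : j ≤ k) :
    descWord k m = descWord k (j + 1) ++ descWord j m := by
  unfold descWord
  rw [← List.reverse_append]
  congr 1
  have := @List.range'_append m (j + 1 - m) (k + 1 - (j + 1)) 1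
  rw [show m + 1 * (j + 1 - m) = j + 1 by omega] at this
  rw [this]
  congr 1
  omega

lemma mem_descWord {k m x : ℕ} (h : x ∈ descWord k m) : m ≤ x ∧ x ≤ k := by
  unfold descWord at h
  rw [List.mem_reverse, List.mem_range'] at h
  omega

/-- Commute a single letter past a list of letters, all far from it. -/
lemma comm_list {n : ℕ} {i : ℕ} (h1 : 1 ≤ i) (h2 : i < n)
    (l : List ℕ) (hl : ∀ x ∈ l, 1 ≤ x ∧ x < n ∧ 1 < max (x - i) (i - x)) :
    ReflTransGen (TRw n) ([i] ++ l) (l ++ [i]) := by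
  induction l with
  | nil => exact .refl
  | cons x t ih =>
    obtain ⟨hx1, hx2, hx3⟩ := hl x (by simp)
    have step : TRw n ([] ++ [i, x] ++ t) ([] ++ [x, i] ++ t) :=
      .congr [] t _ _ (.comm i x h1 h2 hx1 hx2 (by rw [max_comm]; exact hx3))
    have first : ReflTransGen (TRw n) ([i] ++ x :: t) ([x] ++ ([i] ++ t)) := by
      simpa using ReflTransGen.single step
    have rest : ReflTransGen (TRw n) ([x] ++ ([i] ++ t)) ([x] ++ (t ++ [i])) := by
      have := rtg_congr (n := n) [x] [] (ih (fun y hy => hl y (by simp [hy])))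
      simpa using this
    exact first.trans (by simpa [List.append_assoc] using rest)

/-- Key lemma A : `i · (k,…,m) →* (k,…,m) · (i+1)` for `m ≤ i < k`. -/
lemma lemA {n k i m : ℕ} (hm : 1 ≤ m) (hmi : m ≤ i) (hik : i < k) (hkn : k < n) :
    ReflTransGen (TRw n)
      ([i] ++ descWord k m) (descWord k m ++ [i + 1]) := by
  have hi1 : 1 ≤ i := le_trans hm hmi
  have hin : i + 1 < n := by omega
  have hd : descWord k m
      = descWord k (i + 2) ++ [i + 1] ++ [i] ++ descWord (i - 1) m := by
    rw [descWord_split (j := i) hmi (le_of_lt hik),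
        descWord_cons (by omega) hmi,
        descWord_concat (k := k) (m := i + 1) (by omega)]
    simp [List.append_assoc]
  -- step 1 : move i left past (k,…,i+2)
  have s1 : ReflTransGen (TRw n)
      ([i] ++ descWord k (i + 2)) (descWord k (i + 2) ++ [i]) := by
    apply comm_list hi1 (by omega)
    intro x hx
    have := mem_descWord hx
    constructor; · omega
    constructor; · omega
    · omega
  -- step 2 : braid
  have s2 : TRw n
      (descWord k (i + 2) ++ [i, i + 1, i] ++ descWord (i - 1) m)
      (descWord k (i + 2) ++ [i + 1, i, i + 1] ++ descWord (i - 1) m) :=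
    .congr _ _ _ _ (.braid i hi1 hin)
  -- step 3 : move i+1 right past (i-1,…,m)
  have s3 : ReflTransGen (TRw n)
      ([i + 1] ++ descWord (i - 1) m) (descWord (i - 1) m ++ [i + 1]) := by
    apply comm_list (by omega) hin
    intro x hx
    have := mem_descWord hx
    constructor; · omega
    constructor; · omega
    · omega
  have t1 : ReflTransGen (TRw n) ([i] ++ descWord k m)
      (descWord k (i + 2) ++ [i] ++ ([i + 1] ++ [i] ++ descWord (i - 1) m)) := by
    rw [hd]
    have := rtg_congr (n := n) [] ([i + 1] ++ [i] ++ descWord (i - 1) m) s1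
    simpa [List.append_assoc] using this
  have t2 : ReflTransGen (TRw n)
      (descWord k (i + 2) ++ [i] ++ ([i + 1] ++ [i] ++ descWord (i - 1) m))
      (descWord k (i + 2) ++ [i + 1, i] ++ ([i + 1] ++ descWord (i - 1) m)) := by
    apply ReflTransGen.single
    simpa [List.append_assoc] using s2
  have t3 : ReflTransGen (TRw n)
      (descWord k (i + 2) ++ [i + 1, i] ++ ([i + 1] ++ descWord (i - 1) m))
      (descWord k (i + 2) ++ [i + 1, i] ++ (descWord (i - 1) m ++ [i + 1])) := by
    have := rtg_congr (n := n) (descWord k (i + 2) ++ [i + 1, i]) [] s3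
    simpa [List.append_assoc] using this
  have t4 : descWord k (i + 2) ++ [i + 1, i] ++ (descWord (i - 1) m ++ [i + 1])
      = descWord k m ++ [i + 1] := by rw [hd]; simp [List.append_assoc]
  exact ((t1.trans t2).trans t3).trans (t4 ▸ ReflTransGen.refl)

/-- Suffix of `Dword`: `(n-1,…,m)(n-1,…,m+1)⋯(n-1)`. -/
def Esub (n m : ℕ) : List ℕ :=
  ((List.range' m (n - m)).map (fun t => descWord (n - 1) t)).flatten

lemma Esub_one (n : ℕ) : Esub n 1 = Dword n := rfl

lemma Esub_decomp {n m : ℕ} (h : m ≤ n - 1) (h1 : 1 ≤ m) :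
    Esub n m = descWord (n - 1) m ++ Esub n (m + 1) := by
  unfold Esub
  rw [show n - m = (n - (m + 1)) + 1 by omega, List.range'_succ]
  simp

/-- Lemma B : absorption of a letter `j ≥ m` into `Esub n m`. -/
lemma lemB {n : ℕ} : ∀ d m j, n - m ≤ d → 1 ≤ m → m ≤ j → j ≤ n - 1 →
    ReflTransGen (TRw n) ([j] ++ Esub n m) (Esub n m) := by
  intro d
  induction d with
  | zero => intro m j hd hm hmj hj; omega
  | succ d ih =>
    intro m j hd hm hmj hj
    have hmn : m ≤ n - 1 := le_trans hmj hj
    have hn2 : 2 ≤ n := by omega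
    rw [Esub_decomp hmn hm]
    rcases eq_or_lt_of_le hj with hje | hjl
    · -- j = n - 1 : dup
      have hdc : descWord (n - 1) m = (n - 1) :: descWord (n - 1 - 1) m :=
        descWord_cons (by omega) hmn
      subst hje
      rw [hdc]
      apply ReflTransGen.single
      have := TRw.congr (n := n) [] (descWord (n - 1 - 1) m ++ Esub n (m + 1)) _ _
        (TRw.dup (n - 1) (by omega) (by omega))
      simpa [List.append_assoc] using this
    · -- j < n - 1 : push through first block, recurse
      have s1 : ReflTransGen (TRw n)
          ([j] ++ descWord (n - 1) m) (descWord (n - 1) m ++ [j + 1]) :=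
        lemA hm hmj hjl (by omega)
      have s1' : ReflTransGen (TRw n)
          ([j] ++ descWord (n - 1) m ++ Esub n (m + 1))
          (descWord (n - 1) m ++ ([j + 1] ++ Esub n (m + 1))) := by
        have := rtg_congr (n := n) [] (Esub n (m + 1)) s1
        simpa [List.append_assoc] using this
      have s2 : ReflTransGen (TRw n)
          ([j + 1] ++ Esub n (m + 1)) (Esub n (m + 1)) :=
        ih (m + 1) (j + 1) (by omega) (by omega) (by omega) (by omega)
      have s2' : ReflTransGen (TRw n)
          (descWord (n - 1) m ++ ([j + 1] ++ Esub n (m + 1)))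
          (descWord (n - 1) m ++ Esub n (m + 1)) := by
        have := rtg_congr (n := n) (descWord (n - 1) m) [] s2
        simpa using this
      exact (by simpa [List.append_assoc] using s1'.trans s2' :
        ReflTransGen (TRw n) ([j] ++ (descWord (n - 1) m ++ Esub n (m + 1)))
          (descWord (n - 1) m ++ Esub n (m + 1)))

lemma absorb_letter {n j : ℕ} (h1 : 1 ≤ j) (h2 : j < n) :
    ReflTransGen (TRw n) ([j] ++ Dword n) (Dword n) := by
  rw [← Esub_one]
  exact lemB n 1 j (by omega) le_rfl h1 (by omega)

lemma append_rtg {n : ℕ} (u : List ℕ) (hu : ∀ x ∈ u, 1 ≤ x ∧ x < n) :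
    ∀ w : List ℕ, ReflTransGen (TRw n) w (w ++ u) := by
  induction u with
  | nil => intro w; simpa using ReflTransGen.refl
  | cons x t ih =>
    intro w
    obtain ⟨hx1, hx2⟩ := hu x (by simp)
    have step : TRw n w (w ++ [x]) := by
      have := TRw.congr (n := n) w [] [] [x] (TRw.empty x hx1 hx2)
      simpa using this
    have rest := ih (fun y hy => hu y (by simp [hy])) (w ++ [x])
    exact (ReflTransGen.single step).trans (by simpa [List.append_assoc] using rest)

lemma absorb_word {n : ℕ} (w : List ℕ) (hw : ∀ i ∈ w, 1 ≤ i ∧ i < n) :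
    ReflTransGen (TRw n) (w ++ Dword n) (Dword n) := by
  induction w using List.reverseRecOn with
  | nil => simpa using ReflTransGen.refl
  | append_singleton w i ih =>
    obtain ⟨hi1, hi2⟩ := hw i (by simp)
    have s1 : ReflTransGen (TRw n) (w ++ ([i] ++ Dword n)) (w ++ Dword n) := by
      have := rtg_congr (n := n) w [] (absorb_letter hi1 hi2)
      simpa using this
    exact (by simpa [List.append_assoc] using s1 :
        ReflTransGen (TRw n) (w ++ [i] ++ Dword n) (w ++ Dword n)).trans
      (ih (fun y hy => hw y (by simp [hy])))

lemma mem_Dword {n x : ℕ} (h : x ∈ Dword n) : 1 ≤ x ∧ x < n := by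
  unfold Dword at h
  simp only [List.mem_flatten, List.mem_map] at h
  obtain ⟨l, ⟨t, ht, rfl⟩, hx⟩ := h
  rw [List.mem_range'] at ht
  have := mem_descWord hx
  omega

/-- Part 1, as an invariant over `j`. -/
lemma part1_aux {n k : ℕ} (hk : 0 < k) (hkn : k < n) :
    ∀ j, j ≤ k - 1 →
    ReflTransGen (TRw n) (descWord k 1 ++ descWord k 1)
      (descWord k (j + 1) ++ descWord k 1 ++ descWord (j + 1) 2) := by
  intro j
  induction j with
  | zero =>
    intro _
    have : descWord 1 2 = [] := rfl
    rw [this]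
    simpa using ReflTransGen.refl
  | succ j ih =>
    intro hj
    have hjk : j + 1 < k := by omega
    refine (ih (by omega)).trans ?_
    have hd : descWord k (j + 1) = descWord k (j + 2) ++ [j + 1] :=
      descWord_concat (by omega)
    have hA : ReflTransGen (TRw n)
        ([j + 1] ++ descWord k 1) (descWord k 1 ++ [j + 2]) :=
      lemA le_rfl (by omega) hjk hkn
    have hc : ReflTransGen (TRw n)
        (descWord k (j + 2) ++ ([j + 1] ++ descWord k 1) ++ descWord (j + 1) 2)
        (descWord k (j + 2) ++ (descWord k 1 ++ [j + 2]) ++ descWord (j + 1) 2) :=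
      rtg_congr _ _ hA
    have he : descWord (j + 2) 2 = (j + 2) :: descWord (j + 1) 2 := by
      have := descWord_cons (k := j + 2) (m := 2) (by omega) (by omega)
      simpa using this
    rw [hd, he]
    refine ReflTransGen.trans ?_ (by simpa [List.append_assoc] using hc)
    simp only [List.append_assoc, List.singleton_append, List.cons_append]
    exact ReflTransGen.refl

theorem part1 {n : ℕ} (k : ℕ) (hk : 0 < k) (hkn : k < n) :
    ReflTransGen (TRw n) (descWord k 1 ++ descWord k 1)
      (descWord k 1 ++ descWord k 2) := by
  have h := part1_aux hk hkn (k - 1) le_rfl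
  rw [show k - 1 + 1 = k by omega] at h
  have hkk : descWord k k = [k] := by
    unfold descWord
    rw [show k + 1 - k = 1 by omega]
    rfl
  have hcons : descWord k 1 = k :: descWord (k - 1) 1 :=
    descWord_cons hk hk
  refine h.trans ?_
  rw [hkk, hcons]
  apply ReflTransGen.single
  have := TRw.congr (n := n) [] (descWord (k - 1) 1 ++ descWord k 2) _ _
    (TRw.dup k hk hkn)
  simpa [List.append_assoc] using this

/-- `(k,…,1)(k,…,1) → (k,…,1)(k,…,2)` for `0 < k < n`, and every word over
`T = {1,…,n-1}` can be rewritten to `D₁`. -/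
theorem stmt19 (n : ℕ) :
    (∀ k, 0 < k → k < n →
      Relation.ReflTransGen (TRw n) (descWord k 1 ++ descWord k 1)
        (descWord k 1 ++ descWord k 2)) ∧
    (∀ w : List ℕ, (∀ i ∈ w, 1 ≤ i ∧ i < n) →
      Relation.ReflTransGen (TRw n) w (Dword n)) := by
  constructor
  · intro k hk hkn
    exact part1 k hk hkn
  · intro w hw
    have h1 : ReflTransGen (TRw n) w (w ++ Dword n) :=
      append_rtg (Dword n) (fun x hx => mem_Dword hx) w
    exact h1.trans (absorb_word w hw)
end
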